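/- arXiv:1309.4291 — 3 statements merged into one kernel-verified Lean document; each statement's English description precedes it below -/
import Mathlib

section
/- Consider a finite recurrent MDP on S that is skip-free in the negative direction on the tree. Let d be a fixed stationary deterministic policy and x ∈ ℝ. Define y_i and t_i for i ≠ 0 by downward recursion: y_i = (c_i(d(i)) − x + ∑_{k∈D(i)} p̄_{ik}(d(i)) y_k)/p_{iρ(i)}(d(i)) and t_i = (1 + ∑_{k∈D(i)} p̄_{ik}(d(i)) t_k)/p_{iρ(i)}(d(i)) (empty sums when D(i) = ∅). Then: (a) for each i ≠ 0, y_i equals the expected x-revised first-passage cost from i to ρ(i) under d and t_i equals the expected first-passage time from i to ρ(i) under d; (b) H(d, x) = (c_0(d(0)) − x + ∑_{k∈D(0)} p̄_{0k}(d(0)) y_k)/(1 − p_{00}(d(0))) and τ(d) = (1 + ∑_{k∈D(0)} p̄_{0k}(d(0)) t_k)/(1 − p_{00}(d(0))); (c) if x = 0 then g(d) = (c_0(d(0)) + ∑_{k∈D(0)} p̄_{0k}(d(0)) y_k)/(1 + ∑_{k∈D(0)} p̄_{0k}(d(0)) t_k). -/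
open Finset Filter

noncomputable section

/-- A rooted tree structure on a state space `S`: a root, a parent map fixing the root,
such that iterating the parent map from any state reaches the root. -/
structure SFTree (S : Type*) where
  root : S
  parent : S → S
  parent_root : parent root = root
  reaches_root : ∀ i : S, ∃ n : ℕ, parent^[n] i = root

namespace SFTree

variable {S : Type*} [Fintype S] [DecidableEq S]

open Classical in
/-- The set of descendants of `i`: states `j ≠ i` whose path to the root passes through `i`. -/
def desc (T : SFTree S) (i : S) : Finset S :=
  Finset.univ.filter fun j => j ≠ i ∧ ∃ n : ℕ, T.parent^[n] j = i

open Classical in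
/-- The subtree rooted at `i`: `i` together with its descendants. -/
def subtree (T : SFTree S) (i : S) : Finset S :=
  Finset.univ.filter fun j => ∃ n : ℕ, T.parent^[n] j = i

open Classical in
/-- The states strictly after `i` on the path from `i` to `j`. -/
def delta (T : SFTree S) (i j : S) : Finset S :=
  Finset.univ.filter fun r =>
    r ≠ i ∧ (∃ n : ℕ, T.parent^[n] j = r) ∧ (∃ m : ℕ, T.parent^[m] r = i)

end SFTree

/-- A finite Markov decision process: costs and transition probabilities. -/
structure MDP (S A : Type*) [Fintype S] where
  c : S → A → ℝ
  p : S → A → S → ℝ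
  p_nonneg : ∀ i a j, 0 ≤ p i a j
  p_sum_one : ∀ i a, ∑ j, p i a j = 1

namespace MDP

variable {S A : Type*} [Fintype S] [DecidableEq S]

/-- Tail probability: the probability of jumping from `i` into the subtree rooted at `k`. -/
def ptail (M : MDP S A) (T : SFTree S) (i : S) (a : A) (k : S) : ℝ :=
  ∑ s ∈ T.subtree k, M.p i a s

/-- Skip-free in the negative direction on the tree `T`: from `i ≠ root` the only possible
transitions are to the parent of `i` or into the subtree rooted at `i`. -/
def IsSkipFree (M : MDP S A) (T : SFTree S) : Prop :=
  ∀ i, i ≠ T.root → ∀ a j, M.p i a j ≠ 0 → j = T.parent i ∨ j ∈ T.subtree i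

/-- Transition matrix of the stationary deterministic policy `d`. -/
def Pmat (M : MDP S A) (d : S → A) : Matrix S S ℝ :=
  Matrix.of fun i j => M.p i (d i) j

/-- Cost vector of the stationary deterministic policy `d`. -/
def cvec (M : MDP S A) (d : S → A) : S → ℝ := fun i => M.c i (d i)

/-- Expected average cost of the stationary deterministic policy `d` starting from `i`. -/
def avgCost (M : MDP S A) (d : S → A) (i : S) : ℝ :=
  Filter.limsup
    (fun n : ℕ => (n : ℝ)⁻¹ * ∑ t ∈ Finset.range n, ((M.Pmat d ^ t).mulVec (M.cvec d)) i)
    Filter.atTop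

end MDP

/-- A (substochastic) matrix is irreducible if every state can reach every other state
in a positive number of steps. -/
def MatIrreducible {S : Type*} [Fintype S] [DecidableEq S] (P : Matrix S S ℝ) : Prop :=
  ∀ i j, ∃ n : ℕ, 0 < n ∧ 0 < (P ^ n) i j

/-- A recurrent model: every stationary deterministic policy has an irreducible
transition matrix. -/
def IsRecurrentModel {S A : Type*} [Fintype S] [DecidableEq S] (M : MDP S A) : Prop :=
  ∀ d : S → A, MatIrreducible (M.Pmat d)

/-- The probability weight of a path of length `n`. -/
def pathWt {S : Type*} [Fintype S] (P : Matrix S S ℝ) {n : ℕ} (x : Fin (n + 1) → S) : ℝ :=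
  ∏ t : Fin n, P (x t.castSucc) (x t.succ)

open Classical in
/-- `E[f(X_n); τ > n]` for the chain with matrix `P` started at `z`, where `τ` is the
first-return epoch to `z` (the first time the chain enters `z` from a state `≠ z`). -/
def retTerm {S : Type*} [Fintype S] (P : Matrix S S ℝ) (z : S) (f : S → ℝ) (n : ℕ) : ℝ :=
  ∑ x ∈ Finset.univ.filter
      (fun (x : Fin (n + 1) → S) =>
        x 0 = z ∧ ∀ t : Fin n, ¬(x t.castSucc ≠ z ∧ x t.succ = z)),
    pathWt P x * f (x (Fin.last n))

/-- `E[∑_{t=0}^{τ-1} f(X_t)]` for the chain with matrix `P` started at `z`, where `τ` is the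
first-return epoch to `z`. -/
def retSum {S : Type*} [Fintype S] (P : Matrix S S ℝ) (z : S) (f : S → ℝ) : ℝ :=
  ∑' n : ℕ, retTerm P z f n

open Classical in
/-- `E[f(X_n); σ > n]` for the chain with matrix `P` started at `i`, where `σ` is the
first-passage epoch to `z`, `σ = min {t > 0 : X_t = z}`. -/
def passTerm {S : Type*} [Fintype S] (P : Matrix S S ℝ) (i z : S) (f : S → ℝ) (n : ℕ) : ℝ :=
  ∑ x ∈ Finset.univ.filter
      (fun (x : Fin (n + 1) → S) => x 0 = i ∧ ∀ t : Fin n, x t.succ ≠ z),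
    pathWt P x * f (x (Fin.last n))

/-- `E[∑_{t=0}^{σ-1} f(X_t)]` for the chain with matrix `P` started at `i`, where `σ` is the
first-passage epoch to `z`. -/
def passSum {S : Type*} [Fintype S] (P : Matrix S S ℝ) (i z : S) (f : S → ℝ) : ℝ :=
  ∑' n : ℕ, passTerm P i z f n

end

/-!
Killing the chain when it enters `z` (the matrix `taboo P z`) turns the expected first-passage
cost to `z` into the potential `∑ₙ Nⁿ f` of a substochastic matrix `N`. Irreducibility makes some
power of `N` lose mass from every row, so the potential converges and is the unique solution of
`u = f + N u` on any set that `N` does not leave. By skip-freeness, summing `y` over the tree path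
from `j` up to (but excluding) `z` solves this equation on the descendants of `z`; when `z` is the
parent of `i` that path is `{i}`, which gives (a). Conditioning on the first step out of the root
gives (b). For (c), let `Y` and `τ` be these path sums of `y` and `t` towards the root and `g` the
displayed ratio: then `h = Y - g τ` solves the Poisson equation `c + P h = g + h`, and the
telescoping `Pᵗ c = g + Pᵗ h - Pᵗ⁺¹ h` makes the Cesàro means of `Pᵗ c` converge to `g`.
-/

open Matrix

namespace SFTree

variable {S : Type*} (T : SFTree S)

lemma iterate_parent_root (n : ℕ) : T.parent^[n] T.root = T.root :=
  Function.iterate_fixed T.parent_root n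

lemma eq_root_of_isPeriodicPt {u : S} {c : ℕ} (hc : 0 < c)
    (h : Function.IsPeriodicPt T.parent c u) : u = T.root := by
  obtain ⟨m, hm⟩ := T.reaches_root u
  calc u = T.parent^[c * m] u := ((h.mul_const m).eq).symm
    _ = T.parent^[c * m - m] (T.parent^[m] u) := by
        rw [← Function.iterate_add_apply, Nat.sub_add_cancel (Nat.le_mul_of_pos_left m hc)]
    _ = T.root := by rw [hm, T.iterate_parent_root]

variable [Fintype S] {T}

@[simp] lemma mem_subtree {i j : S} : j ∈ T.subtree i ↔ ∃ n, T.parent^[n] j = i := by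
  simp [subtree]

lemma self_mem_subtree (i : S) : i ∈ T.subtree i := mem_subtree.mpr ⟨0, rfl⟩

lemma mem_subtree_trans {i j k : S} (hj : j ∈ T.subtree i) (hk : k ∈ T.subtree j) :
    k ∈ T.subtree i := by
  obtain ⟨n, rfl⟩ := mem_subtree.mp hj
  obtain ⟨m, rfl⟩ := mem_subtree.mp hk
  exact mem_subtree.mpr ⟨n + m, Function.iterate_add_apply _ _ _ _⟩

lemma subtree_subset {i j : S} (hj : j ∈ T.subtree i) : T.subtree j ⊆ T.subtree i :=
  fun _ => mem_subtree_trans hj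

lemma eq_of_mem_subtree_of_mem_subtree {i j : S} (hj : j ∈ T.subtree i)
    (hi : i ∈ T.subtree j) : i = j := by
  obtain ⟨a, rfl⟩ := mem_subtree.mp hj
  obtain ⟨b, hb⟩ := mem_subtree.mp hi
  rcases Nat.eq_zero_or_pos (b + a) with h | h
  · rw [Nat.eq_zero_of_add_eq_zero_left h, Function.iterate_zero_apply]
  · have hper : Function.IsPeriodicPt T.parent (b + a) j := by
      rw [Function.IsPeriodicPt, Function.IsFixedPt, Function.iterate_add_apply, hb]
    rw [T.eq_root_of_isPeriodicPt h hper, T.iterate_parent_root]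

lemma parent_mem_subtree_of_ne {i j : S} (hj : j ∈ T.subtree i) (hne : j ≠ i) :
    T.parent j ∈ T.subtree i := by
  obtain ⟨n, hn⟩ := mem_subtree.mp hj
  cases n with
  | zero => exact absurd hn hne
  | succ n => exact mem_subtree.mpr ⟨n, by rwa [← Function.iterate_succ_apply]⟩

lemma parent_notMem_subtree {j : S} (hj : j ≠ T.root) : T.parent j ∉ T.subtree j := by
  rintro h
  obtain ⟨n, hn⟩ := mem_subtree.mp h
  refine hj (T.eq_root_of_isPeriodicPt (Nat.succ_pos n) ?_)
  rwa [Function.IsPeriodicPt, Function.IsFixedPt, Function.iterate_succ_apply]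

lemma mem_subtree_or_mem_subtree {a b k : S} (ha : k ∈ T.subtree a) (hb : k ∈ T.subtree b) :
    a ∈ T.subtree b ∨ b ∈ T.subtree a := by
  obtain ⟨n, rfl⟩ := mem_subtree.mp ha
  obtain ⟨m, rfl⟩ := mem_subtree.mp hb
  rcases le_total n m with h | h
  · refine .inl (mem_subtree.mpr ⟨m - n, ?_⟩)
    rw [← Function.iterate_add_apply, Nat.sub_add_cancel h]
  · refine .inr (mem_subtree.mpr ⟨n - m, ?_⟩)
    rw [← Function.iterate_add_apply, Nat.sub_add_cancel h]

lemma mem_subtree_of_parent_mem_subtree {j r : S} (h : T.parent j ∈ T.subtree r) :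
    j ∈ T.subtree r := by
  obtain ⟨n, hn⟩ := mem_subtree.mp h
  exact mem_subtree.mpr ⟨n + 1, by rwa [Function.iterate_succ_apply]⟩

variable [DecidableEq S]

@[simp] lemma mem_desc {i j : S} : j ∈ T.desc i ↔ j ≠ i ∧ ∃ n, T.parent^[n] j = i := by
  simp [desc]

lemma mem_desc_iff_mem_subtree {i j : S} : j ∈ T.desc i ↔ j ∈ T.subtree i ∧ j ≠ i := by
  rw [mem_desc, mem_subtree, and_comm]

lemma mem_delta {z j r : S} : r ∈ T.delta z j ↔ r ∈ T.desc z ∧ j ∈ T.subtree r := by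
  simp only [delta, mem_desc, mem_subtree, Finset.mem_filter, Finset.mem_univ, true_and]
  tauto

lemma root_notMem_desc (i : S) : T.root ∉ T.desc i := by
  simp [T.iterate_parent_root, eq_comm]

lemma ne_root_of_mem_desc {z j : S} (hj : j ∈ T.desc z) : j ≠ T.root :=
  fun h => root_notMem_desc z (h ▸ hj)

lemma self_mem_delta {z j : S} (hj : j ∈ T.desc z) : j ∈ T.delta z j :=
  mem_delta.mpr ⟨hj, self_mem_subtree j⟩

lemma desc_root : T.desc T.root = Finset.univ.erase T.root := by
  ext r
  simp [T.reaches_root r]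

lemma subtree_subset_desc {z j : S} (hj : j ∈ T.desc z) : T.subtree j ⊆ T.desc z := by
  intro k hk
  obtain ⟨hjz, hjne⟩ := mem_desc_iff_mem_subtree.mp hj
  refine mem_desc_iff_mem_subtree.mpr ⟨mem_subtree_trans hjz hk, ?_⟩
  rintro rfl
  exact hjne (eq_of_mem_subtree_of_mem_subtree hk hjz)

lemma desc_subset_desc {z j : S} (hj : j ∈ T.desc z) : T.desc j ⊆ T.desc z :=
  fun _ hk => subtree_subset_desc hj (mem_desc_iff_mem_subtree.mp hk).1

lemma parent_eq_or_mem_desc {z j : S} (hj : j ∈ T.desc z) :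
    T.parent j = z ∨ T.parent j ∈ T.desc z := by
  obtain ⟨hjz, hjne⟩ := mem_desc_iff_mem_subtree.mp hj
  rw [mem_desc_iff_mem_subtree]
  by_cases h : T.parent j = z
  · exact .inl h
  · exact .inr ⟨parent_mem_subtree_of_ne hjz hjne, h⟩

lemma mem_desc_parent {i : S} (hi : i ≠ T.root) : i ∈ T.desc (T.parent i) := by
  refine mem_desc_iff_mem_subtree.mpr ⟨mem_subtree.mpr ⟨1, rfl⟩, fun h => ?_⟩
  exact parent_notMem_subtree hi (h ▸ self_mem_subtree i)

lemma delta_self (z : S) : T.delta z z = ∅ := by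
  refine Finset.eq_empty_of_forall_notMem fun r hr => ?_
  obtain ⟨hrz, hzr⟩ := mem_delta.mp hr
  obtain ⟨hzr', hne⟩ := mem_desc_iff_mem_subtree.mp hrz
  exact hne (eq_of_mem_subtree_of_mem_subtree hzr hzr')

lemma delta_parent_self {i : S} (hi : i ≠ T.root) : T.delta (T.parent i) i = {i} := by
  ext r
  rw [mem_delta, Finset.mem_singleton]
  constructor
  · rintro ⟨hr, hir⟩
    obtain ⟨hrp, hne⟩ := mem_desc_iff_mem_subtree.mp hr
    by_contra hri
    exact hne (eq_of_mem_subtree_of_mem_subtree (parent_mem_subtree_of_ne hir (Ne.symm hri)) hrp)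
  · rintro rfl
    exact ⟨mem_desc_parent hi, self_mem_subtree r⟩

end SFTree

namespace SkipFreeMDP

variable {S : Type*}

section PathExpansion

variable [Fintype S]

lemma pathWt_cons (Q : Matrix S S ℝ) {n : ℕ} (i : S) (x : Fin (n + 1) → S) :
    pathWt Q (Fin.cons i x : Fin (n + 2) → S) = Q i (x 0) * pathWt Q x := by
  simp only [pathWt, Fin.prod_univ_succ, Fin.castSucc_zero, Fin.cons_zero, ← Fin.succ_castSucc,
    Fin.cons_succ]

variable [DecidableEq S]

theorem sum_pathWt_cons_eq_pow_mulVec (Q : Matrix S S ℝ) (f : S → ℝ) (n : ℕ) (i : S) :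
    ∑ x : Fin n → S, pathWt Q (Fin.cons i x : Fin (n + 1) → S)
        * f ((Fin.cons i x : Fin (n + 1) → S) (Fin.last n)) = (Q ^ n *ᵥ f) i := by
  induction n generalizing i with
  | zero => simp [pathWt]
  | succ n ih =>
    rw [← (Fin.consEquiv fun _ => S).sum_comp, Fintype.sum_prod_type, pow_succ', ← mulVec_mulVec]
    refine Finset.sum_congr rfl fun k _ => ?_
    rw [← ih k, Finset.mul_sum]
    refine Finset.sum_congr rfl fun x _ => ?_
    change pathWt Q (Fin.cons i (Fin.cons k x : Fin (n + 1) → S) : Fin (n + 2) → S)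
      * f ((Fin.cons i (Fin.cons k x : Fin (n + 1) → S) : Fin (n + 2) → S) (Fin.last n).succ) = _
    rw [pathWt_cons, Fin.cons_succ, Fin.cons_zero, mul_assoc]

theorem sum_filter_pathWt_eq_pow_mulVec (P : Matrix S S ℝ) (C : S → S → Prop) [DecidableRel C]
    (f : S → ℝ) (n : ℕ) (i : S) :
    ∑ x ∈ Finset.univ.filter (fun x : Fin (n + 1) → S =>
        x 0 = i ∧ ∀ t : Fin n, C (x t.castSucc) (x t.succ)),
      pathWt P x * f (x (Fin.last n))
      = ((Matrix.of fun s j => if C s j then P s j else 0) ^ n *ᵥ f) i := by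
  rw [← sum_pathWt_cons_eq_pow_mulVec, Finset.sum_filter,
    ← (Fin.consEquiv fun _ => S).sum_comp, Fintype.sum_prod_type, Finset.sum_eq_single i]
  · refine Finset.sum_congr rfl fun x _ => ?_
    simp only [Fin.consEquiv_apply, Fin.cons_zero, true_and, pathWt, Matrix.of_apply,
      Fintype.prod_ite_zero, ite_mul, zero_mul]
  · intro a _ ha
    simp [ha]
  · simp

end PathExpansion

section Transient

variable [Fintype S] [DecidableEq S] {Q : Matrix S S ℝ}

def rowMass (Q : Matrix S S ℝ) (n : ℕ) (i : S) : ℝ := ∑ j, (Q ^ n) i j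

lemma pow_apply_nonneg (hQ : ∀ i j, 0 ≤ Q i j) (n : ℕ) (i j : S) : 0 ≤ (Q ^ n) i j := by
  induction n generalizing j with
  | zero => by_cases h : i = j <;> simp [one_apply, h]
  | succ n ih =>
    rw [pow_succ, mul_apply]
    exact Finset.sum_nonneg fun k _ => mul_nonneg (ih k) (hQ k j)

lemma rowMass_nonneg (hQ : ∀ i j, 0 ≤ Q i j) (n : ℕ) (i : S) : 0 ≤ rowMass Q n i :=
  Finset.sum_nonneg fun j _ => pow_apply_nonneg hQ n i j

lemma rowMass_add (Q : Matrix S S ℝ) (a b : ℕ) (i : S) :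
    rowMass Q (a + b) i = ∑ k, (Q ^ a) i k * rowMass Q b k := by
  simp only [rowMass, pow_add, mul_apply, Finset.mul_sum]
  exact Finset.sum_comm

lemma rowMass_antitone (hQ : ∀ i j, 0 ≤ Q i j) (hQ1 : ∀ i, ∑ j, Q i j ≤ 1) (i : S) :
    Antitone fun n => rowMass Q n i := by
  refine antitone_nat_of_succ_le fun n => ?_
  calc rowMass Q (n + 1) i = ∑ k, (Q ^ n) i k * ∑ j, Q k j := by
        rw [rowMass_add]; simp [rowMass]
    _ ≤ ∑ k, (Q ^ n) i k * 1 := by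
        gcongr with k
        · exact pow_apply_nonneg hQ n i k
        · exact hQ1 k
    _ = rowMass Q n i := by simp [rowMass]

lemma rowMass_le_one (hQ : ∀ i j, 0 ≤ Q i j) (hQ1 : ∀ i, ∑ j, Q i j ≤ 1) (n : ℕ) (i : S) :
    rowMass Q n i ≤ 1 := by
  simpa [rowMass, one_apply] using rowMass_antitone hQ hQ1 i (Nat.zero_le n)

lemma abs_pow_mulVec_le (hQ : ∀ i j, 0 ≤ Q i j) (n : ℕ) {v : S → ℝ} {C : ℝ}
    (hv : ∀ j, |v j| ≤ C) (i : S) : |(Q ^ n *ᵥ v) i| ≤ rowMass Q n i * C := by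
  calc |(Q ^ n *ᵥ v) i| ≤ ∑ j, |(Q ^ n) i j * v j| := Finset.abs_sum_le_sum_abs _ _
    _ ≤ ∑ j, (Q ^ n) i j * C := by
        gcongr with j
        rw [abs_mul, abs_of_nonneg (pow_apply_nonneg hQ n i j)]
        exact mul_le_mul_of_nonneg_left (hv j) (pow_apply_nonneg hQ n i j)
    _ = rowMass Q n i * C := by rw [rowMass, Finset.sum_mul]

lemma pow_apply_le_pow_apply {Q' : Matrix S S ℝ} (hQ : ∀ i j, 0 ≤ Q i j)
    (hQQ' : ∀ i j, Q i j ≤ Q' i j) (n : ℕ) (i j : S) : (Q ^ n) i j ≤ (Q' ^ n) i j := by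
  induction n generalizing j with
  | zero => rfl
  | succ n ih =>
    rw [pow_succ, pow_succ, mul_apply, mul_apply]
    refine Finset.sum_le_sum fun k _ => mul_le_mul (ih k) (hQQ' k j) (hQ k j) ?_
    exact (pow_apply_nonneg hQ n i k).trans (ih k)

lemma summable_pow_div {r : ℝ} (h0 : 0 ≤ r) (h1 : r < 1) {m : ℕ} (hm : 0 < m) :
    Summable fun n : ℕ => r ^ (n / m) := by
  have : NeZero m := ⟨hm.ne'⟩
  rw [← (Nat.divModEquiv m).symm.summable_iff]
  have hblock : (fun n : ℕ => r ^ (n / m)) ∘ (Nat.divModEquiv m).symm = fun p => r ^ p.1 := by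
    funext p
    simp only [Function.comp_apply, Nat.divModEquiv, Equiv.coe_fn_symm_mk]
    rw [mul_comm, Nat.mul_add_div hm, Nat.div_eq_of_lt p.2.2, add_zero]
  rw [hblock]
  simpa using (summable_geometric_of_lt_one h0 h1).mul_of_nonneg
    (Summable.of_finite (f := fun _ : Fin m => (1 : ℝ))) (fun n => pow_nonneg h0 n)
    (fun _ => zero_le_one)

lemma rowMass_le_pow_div (hQ : ∀ i j, 0 ≤ Q i j) (hQ1 : ∀ i, ∑ j, Q i j ≤ 1) {m : ℕ}
    (hm : 0 < m) {r : ℝ} (hr : ∀ i, rowMass Q m i ≤ r) (n : ℕ) (i : S) :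
    rowMass Q n i ≤ r ^ (n / m) := by
  induction n using Nat.strong_induction_on generalizing i with
  | _ n ih =>
    rcases lt_or_ge n m with hn | hn
    · rw [Nat.div_eq_of_lt hn, pow_zero]
      exact rowMass_le_one hQ hQ1 n i
    · have hr0 : 0 ≤ r := (rowMass_nonneg hQ m i).trans (hr i)
      obtain ⟨k, rfl⟩ := Nat.exists_eq_add_of_le hn
      calc rowMass Q (m + k) i = ∑ j, (Q ^ m) i j * rowMass Q k j := rowMass_add Q m k i
        _ ≤ ∑ j, (Q ^ m) i j * r ^ (k / m) := by
            gcongr with j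
            · exact pow_apply_nonneg hQ m i j
            · exact ih k (by omega) j
        _ = rowMass Q m i * r ^ (k / m) := by rw [rowMass, Finset.sum_mul]
        _ ≤ r * r ^ (k / m) := by gcongr; exact hr i
        _ = r ^ ((m + k) / m) := by
            rw [Nat.add_div_left k hm, pow_succ']

structure IsTransient (Q : Matrix S S ℝ) : Prop where
  nonneg : ∀ i j, 0 ≤ Q i j
  rowSum_le_one : ∀ i, ∑ j, Q i j ≤ 1
  exists_rowMass_le : ∃ m > 0, ∃ r ∈ Set.Ico (0 : ℝ) 1, ∀ i, rowMass Q m i ≤ r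

noncomputable def potential (Q : Matrix S S ℝ) (f : S → ℝ) (i : S) : ℝ := ∑' n : ℕ, (Q ^ n *ᵥ f) i

namespace IsTransient

variable (hQ : IsTransient Q)
include hQ

lemma summable_pow_mulVec (f : S → ℝ) (i : S) : Summable fun n : ℕ => (Q ^ n *ᵥ f) i := by
  obtain ⟨m, hm, r, ⟨hr0, hr1⟩, hr⟩ := hQ.exists_rowMass_le
  obtain ⟨C, hC⟩ := Finite.exists_le fun j => |f j|
  refine .of_norm_bounded ((summable_pow_div hr0 hr1 hm).mul_right |C|) fun n => ?_
  calc ‖(Q ^ n *ᵥ f) i‖ ≤ rowMass Q n i * |C| :=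
        abs_pow_mulVec_le hQ.nonneg n (fun j => (hC j).trans (le_abs_self C)) i
    _ ≤ r ^ (n / m) * |C| := by
        gcongr
        exact rowMass_le_pow_div hQ.nonneg hQ.rowSum_le_one hm hr n i

lemma potential_eq (f : S → ℝ) (i : S) : potential Q f i = f i + (Q *ᵥ potential Q f) i := by
  rw [potential, (hQ.summable_pow_mulVec f i).tsum_eq_zero_add, pow_zero, one_mulVec]
  congr 1
  calc ∑' n : ℕ, (Q ^ (n + 1) *ᵥ f) i = ∑' n : ℕ, ∑ k, Q i k * (Q ^ n *ᵥ f) k := by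
        simp only [pow_succ', ← mulVec_mulVec]; rfl
    _ = ∑ k, Q i k * potential Q f k := by
        rw [Summable.tsum_finsetSum fun k _ => (hQ.summable_pow_mulVec f k).mul_left _]
        simp only [potential, tsum_mul_left]

lemma eq_zero_of_harmonicOn {W : Finset S} {w : S → ℝ} (hharm : ∀ j ∈ W, w j = (Q *ᵥ w) j)
    (hout : ∀ j ∉ W, w j = 0) (j : S) : w j = 0 := by
  have : Nonempty S := ⟨j⟩
  obtain ⟨m, -, r, ⟨-, hr1⟩, hr⟩ := hQ.exists_rowMass_le
  obtain ⟨j₀, hj₀⟩ := Finite.exists_max fun k => |w k|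
  have hbound : ∀ n k, |w k| ≤ rowMass Q n k * |w j₀| := by
    intro n
    induction n with
    | zero => simpa [rowMass, one_apply] using hj₀
    | succ n ih =>
      intro k
      by_cases hk : k ∈ W
      · calc |w k| = |∑ l, Q k l * w l| := by rw [hharm k hk]; rfl
          _ ≤ ∑ l, Q k l * (rowMass Q n l * |w j₀|) := by
              refine (Finset.abs_sum_le_sum_abs _ _).trans (Finset.sum_le_sum fun l _ => ?_)
              rw [abs_mul, abs_of_nonneg (hQ.nonneg k l)]
              exact mul_le_mul_of_nonneg_left (ih l) (hQ.nonneg k l)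
          _ = rowMass Q (n + 1) k * |w j₀| := by
              rw [add_comm, rowMass_add, Finset.sum_mul]
              simp [mul_assoc]
      · rw [hout k hk, abs_zero]
        exact mul_nonneg (rowMass_nonneg hQ.nonneg _ _) (abs_nonneg _)
  have : |w j₀| ≤ r * |w j₀| :=
    (hbound m j₀).trans (mul_le_mul_of_nonneg_right (hr j₀) (abs_nonneg _))
  have : |w j₀| = 0 := by nlinarith [abs_nonneg (w j₀)]
  exact abs_eq_zero.mp (le_antisymm (this ▸ hj₀ j) (abs_nonneg _))

theorem potential_eqOn {W : Finset S} (hW : ∀ j ∈ W, ∀ k ∉ W, Q j k = 0) {f v : S → ℝ}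
    (hv : ∀ j ∈ W, v j = f j + (Q *ᵥ v) j) : ∀ j ∈ W, potential Q f j = v j := by
  set w : S → ℝ := fun j => if j ∈ W then potential Q f j - v j else 0 with hw
  have hharm : ∀ j ∈ W, w j = (Q *ᵥ w) j := by
    intro j hj
    have hQw : (Q *ᵥ w) j = (Q *ᵥ potential Q f) j - (Q *ᵥ v) j := by
      simp only [mulVec, dotProduct, ← Finset.sum_sub_distrib, ← mul_sub]
      refine Finset.sum_congr rfl fun k _ => ?_
      by_cases hk : k ∈ W
      · simp [hw, hk]
      · simp [hW j hj k hk]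
    rw [hQw]
    simp only [hw, if_pos hj]
    rw [hQ.potential_eq f j, hv j hj]
    ring
  intro j hj
  have := hQ.eq_zero_of_harmonicOn hharm (fun k hk => if_neg hk) j
  simp only [hw, if_pos hj] at this
  linarith

end IsTransient

theorem isTransient_of_forall_exists_rowMass_lt (hQ : ∀ i j, 0 ≤ Q i j)
    (hQ1 : ∀ i, ∑ j, Q i j ≤ 1) (hlt : ∀ i, ∃ n, rowMass Q n i < 1) : IsTransient Q := by
  refine ⟨hQ, hQ1, ?_⟩
  choose n hn using hlt
  set m := Finset.univ.sup n + 1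
  have hm : ∀ i, rowMass Q m i < 1 := fun i =>
    (rowMass_antitone hQ hQ1 i (Nat.le_succ_of_le (Finset.le_sup (Finset.mem_univ i)))).trans_lt
      (hn i)
  refine ⟨m, Nat.succ_pos _, ?_⟩
  rcases isEmpty_or_nonempty S with hS | hS
  · exact ⟨0, ⟨le_rfl, one_pos⟩, fun i => isEmptyElim i⟩
  · obtain ⟨i₀, hi₀⟩ := Finite.exists_max fun i => rowMass Q m i
    exact ⟨rowMass Q m i₀, ⟨rowMass_nonneg hQ m i₀, hm i₀⟩, hi₀⟩

end Transient

section Taboo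

variable [DecidableEq S]

def taboo (P : Matrix S S ℝ) (z : S) : Matrix S S ℝ :=
  of fun s j => if j ≠ z then P s j else 0

def returnTaboo (P : Matrix S S ℝ) (z : S) : Matrix S S ℝ :=
  of fun s j => if ¬(s ≠ z ∧ j = z) then P s j else 0

section

variable {P : Matrix S S ℝ} {z : S}

lemma taboo_apply_self_right (i : S) : taboo P z i z = 0 := by simp [taboo]

lemma taboo_apply_of_ne {j : S} (hj : j ≠ z) (i : S) : taboo P z i j = P i j := by
  simp [taboo, hj]

lemma returnTaboo_apply_of_ne {i : S} (hi : i ≠ z) (j : S) :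
    returnTaboo P z i j = taboo P z i j := by
  by_cases hj : j = z <;> simp [returnTaboo, taboo, hi, hj]

lemma returnTaboo_apply_self_left (j : S) : returnTaboo P z z j = P z j := by
  simp [returnTaboo]

end

variable [Fintype S]

theorem passTerm_eq_taboo_pow_mulVec (P : Matrix S S ℝ) (i z : S) (f : S → ℝ) (n : ℕ) :
    passTerm P i z f n = (taboo P z ^ n *ᵥ f) i := by
  rw [passTerm, taboo, ← sum_filter_pathWt_eq_pow_mulVec]
  congr

theorem retTerm_eq_returnTaboo_pow_mulVec (P : Matrix S S ℝ) (z : S) (f : S → ℝ) (n : ℕ) :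
    retTerm P z f n = (returnTaboo P z ^ n *ᵥ f) z := by
  rw [retTerm, returnTaboo, ← sum_filter_pathWt_eq_pow_mulVec]
  congr

lemma passSum_eq_potential (P : Matrix S S ℝ) (i z : S) (f : S → ℝ) :
    passSum P i z f = potential (taboo P z) f i :=
  tsum_congr (passTerm_eq_taboo_pow_mulVec P i z f)

lemma retSum_eq_potential (P : Matrix S S ℝ) (z : S) (f : S → ℝ) :
    retSum P z f = potential (returnTaboo P z) f z :=
  tsum_congr (retTerm_eq_returnTaboo_pow_mulVec P z f)

variable {P : Matrix S S ℝ} {z : S}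

lemma pow_taboo_succ_apply_self_right (n : ℕ) (i : S) : (taboo P z ^ (n + 1)) i z = 0 := by
  simp [pow_succ, mul_apply, taboo_apply_self_right]

lemma pow_returnTaboo_apply_of_ne (n : ℕ) {i : S} (hi : i ≠ z) (j : S) :
    (returnTaboo P z ^ n) i j = (taboo P z ^ n) i j := by
  induction n generalizing i with
  | zero => rfl
  | succ n ih =>
    simp only [pow_succ', mul_apply, returnTaboo_apply_of_ne hi]
    refine Finset.sum_congr rfl fun k _ => ?_
    by_cases hk : k = z
    · rw [hk, taboo_apply_self_right, zero_mul, zero_mul]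
    · rw [ih hk]

lemma potential_returnTaboo_of_ne (f : S → ℝ) {i : S} (hi : i ≠ z) :
    potential (returnTaboo P z) f i = potential (taboo P z) f i := by
  simp only [potential, mulVec, dotProduct, pow_returnTaboo_apply_of_ne _ hi]

lemma taboo_mulVec_of_apply_eq_zero {v : S → ℝ} (hv : v z = 0) : taboo P z *ᵥ v = P *ᵥ v := by
  ext i
  refine Finset.sum_congr rfl fun j _ => ?_
  by_cases hj : j = z
  · rw [hj, hv, mul_zero, mul_zero]
  · exact congrArg (· * v j) (taboo_apply_of_ne hj i)

variable (hP : P ∈ rowStochastic ℝ S)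
include hP

lemma taboo_nonneg (i j : S) : 0 ≤ taboo P z i j := by
  by_cases hj : j = z
  · rw [hj, taboo_apply_self_right]
  · rw [taboo_apply_of_ne hj]; exact nonneg_of_mem_rowStochastic hP

lemma taboo_le (i j : S) : taboo P z i j ≤ P i j := by
  by_cases hj : j = z
  · rw [hj, taboo_apply_self_right]; exact nonneg_of_mem_rowStochastic hP
  · rw [taboo_apply_of_ne hj]

lemma returnTaboo_nonneg (i j : S) : 0 ≤ returnTaboo P z i j := by
  by_cases hi : i = z
  · rw [hi, returnTaboo_apply_self_left]; exact nonneg_of_mem_rowStochastic hP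
  · rw [returnTaboo_apply_of_ne hi]; exact taboo_nonneg hP i j

lemma returnTaboo_rowSum_le_one (i : S) : ∑ j, returnTaboo P z i j ≤ 1 := by
  rw [← sum_row_of_mem_rowStochastic hP i]
  gcongr with j
  by_cases hi : i = z
  · rw [hi, returnTaboo_apply_self_left]
  · rw [returnTaboo_apply_of_ne hi]; exact taboo_le hP i j

lemma taboo_rowSum_le_one (i : S) : ∑ j, taboo P z i j ≤ 1 := by
  rw [← sum_row_of_mem_rowStochastic hP i]
  exact Finset.sum_le_sum fun j _ => taboo_le hP i j

lemma rowMass_taboo_succ_le (n : ℕ) (i : S) :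
    rowMass (taboo P z) (n + 1) i ≤ 1 - (P ^ (n + 1)) i z := by
  have hPn := sum_row_of_mem_rowStochastic (pow_mem hP (n + 1)) i
  rw [← Finset.add_sum_erase _ _ (Finset.mem_univ z)] at hPn
  rw [rowMass, ← Finset.add_sum_erase _ _ (Finset.mem_univ z), pow_taboo_succ_apply_self_right,
    zero_add, ← hPn, add_sub_cancel_left]
  exact Finset.sum_le_sum fun j _ =>
    pow_apply_le_pow_apply (taboo_nonneg hP) (taboo_le hP) (n + 1) i j

lemma passSum_nonneg {f : S → ℝ} (hf : ∀ j, 0 ≤ f j) (i : S) : 0 ≤ passSum P i z f :=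
  tsum_nonneg fun n => by
    rw [passTerm_eq_taboo_pow_mulVec]
    exact Finset.sum_nonneg fun j _ => mul_nonneg (pow_apply_nonneg (taboo_nonneg hP) n i j) (hf j)

theorem isTransient_taboo (hirr : MatIrreducible P) (z : S) : IsTransient (taboo P z) := by
  refine isTransient_of_forall_exists_rowMass_lt (taboo_nonneg hP) (taboo_rowSum_le_one hP)
    fun i => ?_
  obtain ⟨n, hn, hpos⟩ := hirr i z
  obtain ⟨k, rfl⟩ := Nat.exists_eq_succ_of_ne_zero hn.ne'
  exact ⟨k + 1, by linarith [rowMass_taboo_succ_le hP (z := z) k i]⟩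

lemma sum_row_erase (i a : S) : ∑ k ∈ Finset.univ.erase a, P i k = 1 - P i a := by
  rw [← sum_row_of_mem_rowStochastic hP i, ← Finset.add_sum_erase _ _ (Finset.mem_univ a),
    add_sub_cancel_left]

-- From `z` the chain leaves with probability `1 - P z z > 0`, and off `z` the two matrices agree.
theorem isTransient_returnTaboo (hirr : MatIrreducible P) (hzz : P z z < 1) :
    IsTransient (returnTaboo P z) := by
  obtain ⟨m, -, r, ⟨-, hr1⟩, hr⟩ := (isTransient_taboo hP hirr z).exists_rowMass_le
  have hrow : ∀ i, i ≠ z → rowMass (returnTaboo P z) m i = rowMass (taboo P z) m i :=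
    fun i hi => by simp only [rowMass, pow_returnTaboo_apply_of_ne m hi]
  refine isTransient_of_forall_exists_rowMass_lt (returnTaboo_nonneg hP)
    (returnTaboo_rowSum_le_one hP) fun i => ?_
  by_cases hi : i = z
  · subst hi
    have hmass : rowMass (returnTaboo P i) m i ≤ 1 :=
      rowMass_le_one (returnTaboo_nonneg hP) (returnTaboo_rowSum_le_one hP) m i
    refine ⟨1 + m, ?_⟩
    calc rowMass (returnTaboo P i) (1 + m) i
        = P i i * rowMass (returnTaboo P i) m i
          + ∑ k ∈ Finset.univ.erase i, P i k * rowMass (taboo P i) m k := by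
          rw [rowMass_add, ← Finset.add_sum_erase _ _ (Finset.mem_univ i)]
          refine congrArg₂ _ ?_ (Finset.sum_congr rfl fun k hk => ?_)
          · rw [pow_one, returnTaboo_apply_self_left]
          · rw [pow_one, returnTaboo_apply_self_left, hrow k (Finset.ne_of_mem_erase hk)]
      _ ≤ P i i * 1 + ∑ k ∈ Finset.univ.erase i, P i k * r := by
          gcongr with k
          · exact nonneg_of_mem_rowStochastic hP
          · exact nonneg_of_mem_rowStochastic hP
          · exact hr k
      _ = 1 - (1 - P i i) * (1 - r) := by rw [← Finset.sum_mul, sum_row_erase hP]; ring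
      _ < 1 := by
          have : 0 < (1 - P i i) * (1 - r) := mul_pos (by linarith) (by linarith)
          linarith
  · exact ⟨m, by rw [hrow i hi]; exact (hr i).trans_lt hr1⟩

theorem retSum_eq_first_step (hirr : MatIrreducible P) (hzz : P z z < 1) (f : S → ℝ) :
    retSum P z f = f z + P z z * retSum P z f
      + ∑ k ∈ Finset.univ.erase z, P z k * passSum P k z f := by
  rw [retSum_eq_potential, add_assoc]
  refine ((isTransient_returnTaboo hP hirr hzz).potential_eq f z).trans (congrArg _ ?_)
  rw [mulVec, dotProduct, ← Finset.add_sum_erase _ _ (Finset.mem_univ z)]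
  refine congrArg₂ _ (by rw [returnTaboo_apply_self_left]) (Finset.sum_congr rfl fun k hk => ?_)
  rw [returnTaboo_apply_self_left, potential_returnTaboo_of_ne f (Finset.ne_of_mem_erase hk),
    passSum_eq_potential]

end Taboo

section SkipFree

variable [Fintype S]

def IsSkipFreeMatrix (T : SFTree S) (P : Matrix S S ℝ) : Prop :=
  ∀ j, j ≠ T.root → ∀ k, P j k ≠ 0 → k = T.parent j ∨ k ∈ T.subtree j

lemma IsSkipFreeMatrix.apply_eq_zero {T : SFTree S} {P : Matrix S S ℝ}
    (hsf : IsSkipFreeMatrix T P) {j k : S} (hj : j ≠ T.root) (hk : k ≠ T.parent j)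
    (hkj : k ∉ T.subtree j) : P j k = 0 := by
  by_contra h
  rcases hsf j hj k h with h' | h'
  exacts [hk h', hkj h']

lemma isSkipFreeMatrix_pmat {A : Type*} {T : SFTree S} {M : MDP S A} (hsf : M.IsSkipFree T)
    (d : S → A) : IsSkipFreeMatrix T (M.Pmat d) :=
  fun j hj k => hsf j hj (d j) k

-- `M.ptail T j (d j)` unfolds to `tail T (M.Pmat d) j`.
noncomputable def tail (T : SFTree S) (P : Matrix S S ℝ) (j r : S) : ℝ := ∑ s ∈ T.subtree r, P j s

lemma tail_eq_zero {T : SFTree S} {P : Matrix S S ℝ} (hsf : IsSkipFreeMatrix T P) {j r : S}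
    (hj : j ≠ T.root) (hrj : r ∉ T.subtree j) (hjr : j ∉ T.subtree r) : tail T P j r = 0 := by
  refine Finset.sum_eq_zero fun s hs => hsf.apply_eq_zero hj ?_ fun hsj => ?_
  · rintro rfl
    exact hjr (SFTree.mem_subtree_of_parent_mem_subtree hs)
  · rcases SFTree.mem_subtree_or_mem_subtree hsj hs with h | h
    exacts [hjr h, hrj h]

variable [DecidableEq S]

def SolvesPassageRecursion (T : SFTree S) (P : Matrix S S ℝ) (f y : S → ℝ) : Prop :=
  ∀ j, j ≠ T.root → P j (T.parent j) * y j = f j + ∑ r ∈ T.desc j, tail T P j r * y r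

lemma solvesPassageRecursion_of_eq_div {T : SFTree S} {P : Matrix S S ℝ} {f y : S → ℝ}
    (hpar : ∀ i, i ≠ T.root → 0 < P i (T.parent i))
    (hy : ∀ i, i ≠ T.root → y i = (f i + ∑ k ∈ T.desc i, tail T P i k * y k) / P i (T.parent i)) :
    SolvesPassageRecursion T P f y :=
  fun i hi => by rw [hy i hi, mul_div_cancel₀ _ (hpar i hi).ne']

variable {T : SFTree S} {P : Matrix S S ℝ}

lemma mulVec_sum_delta (y : S → ℝ) (z j : S) :
    (P *ᵥ fun k => ∑ r ∈ T.delta z k, y r) j = ∑ r ∈ T.desc z, tail T P j r * y r := by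
  simp only [mulVec, dotProduct, tail, Finset.mul_sum, Finset.sum_mul]
  exact Finset.sum_comm' fun k r => by
    simp only [SFTree.mem_delta, Finset.mem_univ, true_and, and_comm]

section

variable (hsf : IsSkipFreeMatrix T P)
include hsf

lemma sum_desc_tail_mul_eq {z j : S} (hj : j ∈ T.desc z) (y : S → ℝ) :
    ∑ r ∈ T.desc z, tail T P j r * y r
      = ∑ r ∈ T.desc j, tail T P j r * y r + ∑ r ∈ T.delta z j, tail T P j r * y r := by
  have hdisj : Disjoint (T.desc j) (T.delta z j) := Finset.disjoint_left.mpr fun r hr hr' => by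
    obtain ⟨hrj, hne⟩ := SFTree.mem_desc_iff_mem_subtree.mp hr
    exact hne (SFTree.eq_of_mem_subtree_of_mem_subtree (SFTree.mem_delta.mp hr').2 hrj)
  rw [← Finset.sum_union hdisj]
  refine (Finset.sum_subset (Finset.union_subset (SFTree.desc_subset_desc hj)
    fun r hr => (SFTree.mem_delta.mp hr).1) fun r hrz hr => ?_).symm
  rw [Finset.mem_union, not_or, SFTree.mem_desc_iff_mem_subtree, SFTree.mem_delta] at hr
  have hjr : j ∉ T.subtree r := fun h => hr.2 ⟨hrz, h⟩
  have hrj : r ∉ T.subtree j := fun h => hr.1 ⟨h, by rintro rfl; exact hjr (T.self_mem_subtree r)⟩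
  rw [tail_eq_zero hsf (SFTree.ne_root_of_mem_desc hj) hrj hjr, zero_mul]

variable (hP : P ∈ rowStochastic ℝ S)
include hP

lemma tail_self {j : S} (hj : j ≠ T.root) : tail T P j j = 1 - P j (T.parent j) := by
  rw [tail, ← sum_row_erase hP]
  refine Finset.sum_subset (fun s hs => Finset.mem_erase.mpr ⟨?_, Finset.mem_univ s⟩)
    fun s hs hsj => hsf.apply_eq_zero hj (Finset.ne_of_mem_erase hs) hsj
  rintro rfl
  exact SFTree.parent_notMem_subtree hj hs

lemma tail_eq_one {j r : S} (hj : j ≠ T.root) (hjr : j ∈ T.subtree r) (hrj : r ≠ j) :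
    tail T P j r = 1 := by
  rw [tail, ← sum_row_of_mem_rowStochastic hP j]
  refine Finset.sum_subset (Finset.subset_univ _) fun s _ hs => hsf.apply_eq_zero hj ?_ ?_
  · rintro rfl
    exact hs (SFTree.parent_mem_subtree_of_ne hjr (Ne.symm hrj))
  · exact fun hsj => hs (SFTree.subtree_subset hjr hsj)

lemma sum_delta_tail_mul_eq {z j : S} (hj : j ∈ T.desc z) (y : S → ℝ) :
    ∑ r ∈ T.delta z j, tail T P j r * y r
      = (1 - P j (T.parent j)) * y j + ∑ r ∈ (T.delta z j).erase j, y r := by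
  have hjroot := SFTree.ne_root_of_mem_desc hj
  rw [← Finset.add_sum_erase _ _ (SFTree.self_mem_delta hj), tail_self hsf hP hjroot]
  refine congrArg _ (Finset.sum_congr rfl fun r hr => ?_)
  obtain ⟨hrj, hr⟩ := Finset.mem_erase.mp hr
  rw [tail_eq_one hsf hP hjroot (SFTree.mem_delta.mp hr).2 hrj, one_mul]

theorem sum_delta_eq_add_mulVec {f y : S → ℝ} (hy : SolvesPassageRecursion T P f y) {z j : S}
    (hj : j ∈ T.desc z) :
    ∑ r ∈ T.delta z j, y r = f j + (P *ᵥ fun k => ∑ r ∈ T.delta z k, y r) j := by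
  rw [mulVec_sum_delta, sum_desc_tail_mul_eq hsf hj, sum_delta_tail_mul_eq hsf hP hj,
    ← Finset.add_sum_erase _ _ (SFTree.self_mem_delta hj)]
  linarith [hy j (SFTree.ne_root_of_mem_desc hj)]

end

end SkipFree

section Passage

variable [Fintype S] [DecidableEq S] {T : SFTree S} {P : Matrix S S ℝ} (hP : P ∈ rowStochastic ℝ S)
  (hirr : MatIrreducible P) (hsf : IsSkipFreeMatrix T P) {f y : S → ℝ}
  (hy : SolvesPassageRecursion T P f y)
include hP hirr hsf hy

theorem passSum_eq_sum_delta {z j : S} (hj : j ∈ T.desc z) :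
    passSum P j z f = ∑ r ∈ T.delta z j, y r := by
  rw [passSum_eq_potential]
  refine (isTransient_taboo hP hirr z).potential_eqOn (v := fun k => ∑ r ∈ T.delta z k, y r)
    (fun k hk l hl => ?_) (fun k hk => ?_) j hj
  · by_cases hlz : l = z
    · rw [hlz, taboo_apply_self_right]
    · rw [taboo_apply_of_ne hlz]
      refine hsf.apply_eq_zero (SFTree.ne_root_of_mem_desc hk) ?_
        fun hlk => hl (SFTree.subtree_subset_desc hk hlk)
      rintro rfl
      exact (SFTree.parent_eq_or_mem_desc hk).elim hlz hl
  · rw [taboo_mulVec_of_apply_eq_zero (by simp [SFTree.delta_self])]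
    exact sum_delta_eq_add_mulVec hsf hP hy hk

theorem passSum_parent_eq {i : S} (hi : i ≠ T.root) : passSum P i (T.parent i) f = y i := by
  rw [passSum_eq_sum_delta hP hirr hsf hy (SFTree.mem_desc_parent hi),
    SFTree.delta_parent_self hi, Finset.sum_singleton]

theorem retSum_root_eq (h00 : P T.root T.root < 1) :
    retSum P T.root f
      = (f T.root + ∑ k ∈ T.desc T.root, tail T P T.root k * y k) / (1 - P T.root T.root) := by
  have hpass : ∑ k ∈ Finset.univ.erase T.root, P T.root k * passSum P k T.root f
      = ∑ k ∈ T.desc T.root, tail T P T.root k * y k := by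
    rw [← mulVec_sum_delta, mulVec, dotProduct, ← Finset.add_sum_erase _ _ (Finset.mem_univ _),
      SFTree.delta_self, Finset.sum_empty, mul_zero, zero_add, ← SFTree.desc_root]
    exact Finset.sum_congr rfl fun k hk => by rw [passSum_eq_sum_delta hP hirr hsf hy hk]
  rw [eq_div_iff (sub_ne_zero.mpr h00.ne')]
  linear_combination retSum_eq_first_step hP hirr h00 f + hpass

end Passage

section AverageCost

open Topology

variable [Fintype S] [DecidableEq S] {P : Matrix S S ℝ} (hP : P ∈ rowStochastic ℝ S)
include hP

lemma rowMass_eq_one (n : ℕ) (i : S) : rowMass P n i = 1 :=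
  sum_row_of_mem_rowStochastic (pow_mem hP n) i

theorem tendsto_cesaro_of_poisson {c h : S → ℝ} {g : ℝ} (hpois : ∀ j, c j + (P *ᵥ h) j = g + h j)
    (i : S) :
    Tendsto (fun n : ℕ => (n : ℝ)⁻¹ * ∑ t ∈ Finset.range n, (P ^ t *ᵥ c) i) atTop (𝓝 g) := by
  have hterm : ∀ t, (P ^ t *ᵥ c) i = g + (P ^ t *ᵥ h) i - (P ^ (t + 1) *ᵥ h) i := by
    intro t
    have hc : c = fun j => g + h j - (P *ᵥ h) j := funext fun j => by linarith [hpois j]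
    rw [hc, pow_succ, ← mulVec_mulVec]
    simp only [mulVec, dotProduct, mul_sub, mul_add, Finset.sum_sub_distrib, Finset.sum_add_distrib]
    rw [← Finset.sum_mul, ← rowMass, rowMass_eq_one hP, one_mul]
  have hsum : ∀ n : ℕ, ∑ t ∈ Finset.range n, (P ^ t *ᵥ c) i
      = n * g + (h i - (P ^ n *ᵥ h) i) := by
    intro n
    induction n with
    | zero => simp
    | succ n ih => rw [Finset.sum_range_succ, ih, hterm]; push_cast; ring
  obtain ⟨C, hC⟩ := Finite.exists_le fun j => |h j|
  have hbdd : ∀ n : ℕ, |h i - (P ^ n *ᵥ h) i| ≤ 2 * C := by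
    intro n
    have := abs_pow_mulVec_le (Q := P) (fun _ _ => nonneg_of_mem_rowStochastic hP) n hC i
    rw [rowMass_eq_one hP, one_mul] at this
    linarith [abs_sub (h i) ((P ^ n *ᵥ h) i), hC i]
  have herr : Tendsto (fun n : ℕ => (n : ℝ)⁻¹ * (h i - (P ^ n *ᵥ h) i)) atTop (𝓝 0) := by
    refine squeeze_zero_norm (fun n => ?_) (tendsto_const_div_atTop_nhds_zero_nat (2 * C))
    rw [Real.norm_eq_abs, abs_mul, abs_inv, Nat.abs_cast, div_eq_inv_mul]
    exact mul_le_mul_of_nonneg_left (hbdd n) (by positivity)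
  refine (by simpa using tendsto_const_nhds.add herr : Tendsto _ _ (𝓝 g)).congr' ?_
  filter_upwards [eventually_ne_atTop 0] with n hn
  rw [hsum, mul_add, inv_mul_cancel_left₀ (Nat.cast_ne_zero.mpr hn)]

theorem tendsto_cesaro_eq_ratio {T : SFTree S} (hsf : IsSkipFreeMatrix T P) {c y t : S → ℝ}
    (hy : SolvesPassageRecursion T P c y) (ht : SolvesPassageRecursion T P (fun _ => 1) t)
    (hden : 1 + ∑ k ∈ T.desc T.root, tail T P T.root k * t k ≠ 0) (i : S) :
    Tendsto (fun n : ℕ => (n : ℝ)⁻¹ * ∑ s ∈ Finset.range n, (P ^ s *ᵥ c) i) atTop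
      (𝓝 ((c T.root + ∑ k ∈ T.desc T.root, tail T P T.root k * y k)
        / (1 + ∑ k ∈ T.desc T.root, tail T P T.root k * t k))) := by
  generalize hg_def : (c T.root + ∑ k ∈ T.desc T.root, tail T P T.root k * y k)
    / (1 + ∑ k ∈ T.desc T.root, tail T P T.root k * t k) = g
  have hg : g * (1 + ∑ k ∈ T.desc T.root, tail T P T.root k * t k)
      = c T.root + ∑ k ∈ T.desc T.root, tail T P T.root k * y k := by
    rw [← hg_def, div_mul_cancel₀ _ hden]
  let Y : S → ℝ := fun k => ∑ r ∈ T.delta T.root k, y r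
  let τ : S → ℝ := fun k => ∑ r ∈ T.delta T.root k, t r
  refine tendsto_cesaro_of_poisson hP (h := fun k => Y k - g * τ k) (fun j => ?_) i
  have hmulVec : (P *ᵥ fun k => Y k - g * τ k) j = (P *ᵥ Y) j - g * (P *ᵥ τ) j := by
    simp only [mulVec, dotProduct, mul_sub, Finset.sum_sub_distrib, Finset.mul_sum, mul_left_comm]
  rw [hmulVec]
  by_cases hj : j = T.root
  · simp only [Y, τ, hj, mulVec_sum_delta, SFTree.delta_self, Finset.sum_empty]
    linear_combination -hg
  · have hjd : j ∈ T.desc T.root := by simp [SFTree.desc_root, hj]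
    linear_combination -(sum_delta_eq_add_mulVec hsf hP hy hjd)
      + g * sum_delta_eq_add_mulVec hsf hP ht hjd

end AverageCost

lemma pmat_mem_rowStochastic [Fintype S] [DecidableEq S] {A : Type*} (M : MDP S A) (d : S → A) :
    M.Pmat d ∈ rowStochastic ℝ S :=
  mem_rowStochastic_iff_sum.mpr ⟨fun i j => M.p_nonneg i (d i) j, fun i => M.p_sum_one i (d i)⟩

end SkipFreeMDP

open SkipFreeMDP in
theorem stmt8_general {S A : Type*} [Fintype S] [DecidableEq S]
    (T : SFTree S) (M : MDP S A)
    (hsf : M.IsSkipFree T) (hrec : IsRecurrentModel M)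
    (h00 : ∀ a : A, M.p T.root a T.root < 1)
    (hpar : ∀ i, i ≠ T.root → ∀ a : A, 0 < M.p i a (T.parent i))
    (d : S → A) (x : ℝ) (y t : S → ℝ)
    (hy : ∀ i, i ≠ T.root →
      y i = (M.c i (d i) - x + ∑ k ∈ T.desc i, M.ptail T i (d i) k * y k)
          / M.p i (d i) (T.parent i))
    (ht : ∀ i, i ≠ T.root →
      t i = (1 + ∑ k ∈ T.desc i, M.ptail T i (d i) k * t k) / M.p i (d i) (T.parent i)) :
    (∀ i, i ≠ T.root →
        y i = passSum (M.Pmat d) i (T.parent i) (fun s => M.cvec d s - x)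
        ∧ t i = passSum (M.Pmat d) i (T.parent i) (fun _ => (1 : ℝ)))
    ∧ retSum (M.Pmat d) T.root (fun s => M.cvec d s - x)
        = (M.c T.root (d T.root) - x
            + ∑ k ∈ T.desc T.root, M.ptail T T.root (d T.root) k * y k)
          / (1 - M.p T.root (d T.root) T.root)
    ∧ retSum (M.Pmat d) T.root (fun _ => (1 : ℝ))
        = (1 + ∑ k ∈ T.desc T.root, M.ptail T T.root (d T.root) k * t k)
          / (1 - M.p T.root (d T.root) T.root)
    ∧ (x = 0 → ∀ i, M.avgCost d i
        = (M.c T.root (d T.root) + ∑ k ∈ T.desc T.root, M.ptail T T.root (d T.root) k * y k)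
          / (1 + ∑ k ∈ T.desc T.root, M.ptail T T.root (d T.root) k * t k)) := by
  have hP := pmat_mem_rowStochastic M d
  have hsf' := isSkipFreeMatrix_pmat hsf d
  have hpar' : ∀ i, i ≠ T.root → 0 < M.Pmat d i (T.parent i) := fun i hi => hpar i hi (d i)
  have hyr : SolvesPassageRecursion T (M.Pmat d) (fun s => M.cvec d s - x) y :=
    solvesPassageRecursion_of_eq_div hpar' hy
  have htr : SolvesPassageRecursion T (M.Pmat d) (fun _ => 1) t :=
    solvesPassageRecursion_of_eq_div hpar' ht
  have ht_eq : ∀ i, i ≠ T.root → t i = passSum (M.Pmat d) i (T.parent i) (fun _ => 1) :=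
    fun i hi => (passSum_parent_eq hP (hrec d) hsf' htr hi).symm
  refine ⟨fun i hi => ⟨(passSum_parent_eq hP (hrec d) hsf' hyr hi).symm, ht_eq i hi⟩,
    retSum_root_eq hP (hrec d) hsf' hyr (h00 _), retSum_root_eq hP (hrec d) hsf' htr (h00 _), ?_⟩
  rintro rfl i
  have hden : 0 ≤ ∑ k ∈ T.desc T.root, M.ptail T T.root (d T.root) k * t k :=
    Finset.sum_nonneg fun k hk => mul_nonneg (Finset.sum_nonneg fun s _ => M.p_nonneg _ _ s)
      (ht_eq k (SFTree.mem_desc.mp hk).1 ▸ passSum_nonneg hP (fun _ => zero_le_one) k)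
  exact (tendsto_cesaro_eq_ratio hP hsf' (by simpa only [sub_zero] using hyr) htr
    (by positivity) i).limsup_eq

/-- for a finite recurrent skip-free MDP on a tree, a fixed policy `d` and
`x ∈ ℝ`, the values `y` and `t` defined by the downward recursions (with actions `d i`)
equal the expected `x`-revised first-passage cost and the expected first-passage time from
`i` to its parent; `H(d,x)` and `τ(d)` are given by the corresponding root formulas; and if
`x = 0` then `g(d)` equals the displayed ratio. -/
theorem stmt8 {S A : Type*} [Fintype S] [DecidableEq S] [Fintype A] [Nonempty A]
    (T : SFTree S) (M : MDP S A)
    (hsf : M.IsSkipFree T) (hrec : IsRecurrentModel M)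
    (h00 : ∀ a : A, M.p T.root a T.root < 1)
    (hpar : ∀ i, i ≠ T.root → ∀ a : A, 0 < M.p i a (T.parent i))
    (d : S → A) (x : ℝ) (y t : S → ℝ)
    (hy : ∀ i, i ≠ T.root →
      y i = (M.c i (d i) - x + ∑ k ∈ T.desc i, M.ptail T i (d i) k * y k)
          / M.p i (d i) (T.parent i))
    (ht : ∀ i, i ≠ T.root →
      t i = (1 + ∑ k ∈ T.desc i, M.ptail T i (d i) k * t k) / M.p i (d i) (T.parent i)) :
    (∀ i, i ≠ T.root →
        y i = passSum (M.Pmat d) i (T.parent i) (fun s => M.cvec d s - x)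
        ∧ t i = passSum (M.Pmat d) i (T.parent i) (fun _ => (1 : ℝ)))
    ∧ retSum (M.Pmat d) T.root (fun s => M.cvec d s - x)
        = (M.c T.root (d T.root) - x
            + ∑ k ∈ T.desc T.root, M.ptail T T.root (d T.root) k * y k)
          / (1 - M.p T.root (d T.root) T.root)
    ∧ retSum (M.Pmat d) T.root (fun _ => (1 : ℝ))
        = (1 + ∑ k ∈ T.desc T.root, M.ptail T T.root (d T.root) k * t k)
          / (1 - M.p T.root (d T.root) T.root)
    ∧ (x = 0 → ∀ i, M.avgCost d i
        = (M.c T.root (d T.root) + ∑ k ∈ T.desc T.root, M.ptail T T.root (d T.root) k * y k)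
          / (1 + ∑ k ∈ T.desc T.root, M.ptail T T.root (d T.root) k * t k)) :=
  stmt8_general T M hsf hrec h00 hpar d x y t hy ht
end

section
/- Consider the skip-free algorithm applied to a finite recurrent MDP on S that is skip-free in the negative direction on the tree, producing sequences of policies d_n and values g_n. Then the algorithm converges after a finite number of iterations: there exists n with g_{n+1} = g_n (and hence d_{n+1} is average cost optimal); in particular such n exists with n at most the number |A|^{|S|} of stationary deterministic policies. -/
open Finset Filter

open SFTree Matrix

noncomputable section

namespace SFAux

open SFTree

variable {S : Type*} [Fintype S] [DecidableEq S] (T : SFTree S)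

lemma iterate_root (n : ℕ) : T.parent^[n] T.root = T.root := by
  induction n with
  | zero => rfl
  | succ n ih => rw [Function.iterate_succ_apply', ih, T.parent_root]

lemma eq_root_of_loop {i : S} {m : ℕ} (h : T.parent^[m + 1] i = i) : i = T.root := by
  obtain ⟨n, hn⟩ := T.reaches_root i
  have key : ∀ k : ℕ, T.parent^[k * (m + 1)] i = i := by
    intro k
    induction k with
    | zero => simp
    | succ k ih =>
        have he : (k + 1) * (m + 1) = m + 1 + k * (m + 1) := by ring
        rw [he, Function.iterate_add_apply, ih, h]
  have h1 : T.parent^[n * (m + 1)] i = i := key n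
  have h2 : T.parent^[n * m + n] i = T.root := by
    rw [Function.iterate_add_apply, hn, iterate_root]
  rw [show n * (m + 1) = n * m + n by ring, h2] at h1
  exact h1.symm

lemma mem_subtree {i j : S} : j ∈ T.subtree i ↔ ∃ n : ℕ, T.parent^[n] j = i := by
  classical simp [SFTree.subtree]

lemma mem_desc {i j : S} : j ∈ T.desc i ↔ j ≠ i ∧ ∃ n : ℕ, T.parent^[n] j = i := by
  classical simp [SFTree.desc]

lemma mem_delta {i j r : S} : r ∈ T.delta i j ↔
    r ≠ i ∧ (∃ n : ℕ, T.parent^[n] j = r) ∧ (∃ m : ℕ, T.parent^[m] r = i) := by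
  classical simp [SFTree.delta]

lemma self_mem_subtree (i : S) : i ∈ T.subtree i := (mem_subtree T).2 ⟨0, rfl⟩

lemma subtree_trans {i j k : S} (hjk : j ∈ T.subtree k) (hki : k ∈ T.subtree i) :
    j ∈ T.subtree i := by
  obtain ⟨a, ha⟩ := (mem_subtree T).1 hjk
  obtain ⟨b, hb⟩ := (mem_subtree T).1 hki
  exact (mem_subtree T).2 ⟨b + a, by rw [Function.iterate_add_apply, ha, hb]⟩

lemma subtree_antisymm {j k : S} (hjk : j ∈ T.subtree k) (hkj : k ∈ T.subtree j) : j = k := by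
  obtain ⟨a, ha⟩ := (mem_subtree T).1 hjk
  obtain ⟨b, hb⟩ := (mem_subtree T).1 hkj
  have hloop : T.parent^[b + a] j = j := by rw [Function.iterate_add_apply, ha, hb]
  rcases Nat.eq_zero_or_pos (b + a) with h0 | hpos
  · have ha0 : a = 0 := by omega
    rw [ha0] at ha; exact ha
  · obtain ⟨m, hm⟩ := Nat.exists_eq_succ_of_ne_zero (Nat.pos_iff_ne_zero.mp hpos)
    rw [hm] at hloop
    have hj : j = T.root := eq_root_of_loop T hloop
    rw [hj] at ha
    rw [iterate_root] at ha
    rw [hj, ha]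

lemma parent_notMem_subtree {i : S} (hi : i ≠ T.root) : T.parent i ∉ T.subtree i := by
  intro h
  obtain ⟨m, hm⟩ := (mem_subtree T).1 h
  exact hi (eq_root_of_loop T (m := m) (by rw [Function.iterate_succ_apply, hm]))

lemma root_notMem_desc (i : S) : T.root ∉ T.desc i := by
  intro h
  obtain ⟨hne, n, hn⟩ := (mem_desc T).1 h
  rw [iterate_root] at hn
  exact hne hn


lemma subtree_subset_of_mem_desc {i k : S} (h : k ∈ T.desc i) :
    T.subtree k ⊆ T.subtree i := by
  intro j hj
  exact subtree_trans T hj ((mem_subtree T).2 ((mem_desc T).1 h).2)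

lemma notMem_subtree_of_mem_desc {i k : S} (h : k ∈ T.desc i) : i ∉ T.subtree k := by
  intro hik
  obtain ⟨hne, hr⟩ := (mem_desc T).1 h
  exact hne (subtree_antisymm T ((mem_subtree T).2 hr) hik)

lemma card_subtree_lt_of_mem_desc {i k : S} (h : k ∈ T.desc i) :
    (T.subtree k).card < (T.subtree i).card := by
  apply Finset.card_lt_card
  refine ⟨subtree_subset_of_mem_desc T h, fun hsub => ?_⟩
  exact notMem_subtree_of_mem_desc T h (hsub (self_mem_subtree T i))

lemma mem_subtree_root (j : S) : j ∈ T.subtree T.root :=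
  (mem_subtree T).2 (T.reaches_root j)

lemma parent_mem_subtree_of {i j : S} (hne : j ≠ i) (hj : j ∈ T.subtree i) :
    T.parent j ∈ T.subtree i := by
  obtain ⟨n, hn⟩ := (mem_subtree T).1 hj
  cases n with
  | zero => exact absurd hn hne
  | succ m => exact (mem_subtree T).2 ⟨m, by rw [← Function.iterate_succ_apply]; exact hn⟩

/-- Sum of `y` over the strict ancestors-or-self of `i` below the root. -/
def pathSum (y : S → ℝ) (i : S) : ℝ := ∑ r ∈ T.delta T.root i, y r

lemma mem_delta_root {j r : S} :
    r ∈ T.delta T.root j ↔ r ≠ T.root ∧ ∃ n : ℕ, T.parent^[n] j = r := by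
  rw [mem_delta]
  exact ⟨fun ⟨h1, h2, _⟩ => ⟨h1, h2⟩, fun ⟨h1, h2⟩ => ⟨h1, h2, T.reaches_root r⟩⟩

lemma pathSum_root (y : S → ℝ) : pathSum T y T.root = 0 := by
  rw [pathSum]
  apply Finset.sum_eq_zero
  intro r hr
  obtain ⟨h1, n, hn⟩ := (mem_delta_root T).1 hr
  rw [iterate_root] at hn
  exact absurd hn.symm h1

lemma pathSum_parent (y : S → ℝ) {j : S} (hj : j ≠ T.root) :
    pathSum T y j = y j + pathSum T y (T.parent j) := by
  have hset : T.delta T.root j = insert j (T.delta T.root (T.parent j)) := by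
    ext r
    rw [mem_delta_root, Finset.mem_insert, mem_delta_root]
    constructor
    · rintro ⟨h1, n, hn⟩
      cases n with
      | zero => exact Or.inl hn.symm
      | succ m => exact Or.inr ⟨h1, m, by rw [← Function.iterate_succ_apply]; exact hn⟩
    · rintro (rfl | ⟨h1, m, hm⟩)
      · exact ⟨hj, 0, rfl⟩
      · exact ⟨h1, m + 1, by rw [Function.iterate_succ_apply]; exact hm⟩
  have hnotmem : j ∉ T.delta T.root (T.parent j) := by
    intro h
    obtain ⟨h1, n, hn⟩ := (mem_delta_root T).1 h
    exact hj (eq_root_of_loop T (m := n) (by rw [Function.iterate_succ_apply]; exact hn))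
  rw [pathSum, hset, Finset.sum_insert hnotmem]
  rfl

lemma filter_subtree_self_empty (i : S) :
    ((T.desc i).filter (fun k => i ∈ T.subtree k)) = ∅ := by
  classical
  rw [Finset.filter_eq_empty_iff]
  intro k hk
  exact notMem_subtree_of_mem_desc T hk

open Classical in
lemma pathSum_sub (y : S → ℝ) (i : S) :
    ∀ (n : ℕ) (j : S), T.parent^[n] j = i →
      pathSum T y j = pathSum T y i + ∑ k ∈ (T.desc i).filter (fun k => j ∈ T.subtree k), y k := by
  intro n
  induction n with
  | zero =>
      intro j hj
      simp only [Function.iterate_zero, id_eq] at hj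
      subst hj
      rw [filter_subtree_self_empty, Finset.sum_empty, add_zero]
  | succ m ih =>
      intro j hj
      by_cases hji : j = i
      · subst hji
        rw [filter_subtree_self_empty, Finset.sum_empty, add_zero]
      · have hjroot : j ≠ T.root := by
          rintro rfl
          rw [iterate_root] at hj
          exact hji hj
        have hpar : T.parent^[m] (T.parent j) = i := by
          rw [← Function.iterate_succ_apply]; exact hj
        have hset : (T.desc i).filter (fun k => j ∈ T.subtree k)
            = insert j ((T.desc i).filter (fun k => T.parent j ∈ T.subtree k)) := by
          ext k
          simp only [Finset.mem_filter, Finset.mem_insert]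
          constructor
          · rintro ⟨hk, hjk⟩
            by_cases hkj : k = j
            · exact Or.inl hkj
            · exact Or.inr ⟨hk, parent_mem_subtree_of T (fun h => hkj h.symm) hjk⟩
          · rintro (rfl | ⟨hk, hpk⟩)
            · exact ⟨(mem_desc T).2 ⟨hji, m + 1, hj⟩, self_mem_subtree T k⟩
            · obtain ⟨q, hq⟩ := (mem_subtree T).1 hpk
              exact ⟨hk, (mem_subtree T).2 ⟨q + 1,
                by rw [Function.iterate_succ_apply]; exact hq⟩⟩
        have hnm : j ∉ (T.desc i).filter (fun k => T.parent j ∈ T.subtree k) := by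
          intro h
          have := (Finset.mem_filter.1 h).2
          exact parent_notMem_subtree T hjroot this
        rw [pathSum_parent T y hjroot, ih (T.parent j) hpar, hset, Finset.sum_insert hnm]
        ring

end SFAux

namespace SFAux

variable {S A : Type*} [Fintype S] [DecidableEq S] (T : SFTree S) (M : MDP S A)

lemma ptail_nonneg (i : S) (a : A) (k : S) : 0 ≤ M.ptail T i a k :=
  Finset.sum_nonneg fun s _ => M.p_nonneg i a s

/-- Splitting a full sum at a non-root state using skip-freeness. -/
lemma sum_split (hsf : M.IsSkipFree T) {i : S} (hi : i ≠ T.root) (a : A) (f : S → ℝ) :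
    ∑ j, M.p i a j * f j
      = M.p i a (T.parent i) * f (T.parent i) + ∑ j ∈ T.subtree i, M.p i a j * f j := by
  classical
  have hsplit : ∑ j, M.p i a j * f j
      = (∑ j ∈ T.subtree i, M.p i a j * f j)
        + ∑ j ∈ Finset.univ \ T.subtree i, M.p i a j * f j := by
    rw [← Finset.sum_sdiff (Finset.subset_univ (T.subtree i))]
    ring
  have hmem : T.parent i ∈ Finset.univ \ T.subtree i := by
    rw [Finset.mem_sdiff]
    exact ⟨Finset.mem_univ _, parent_notMem_subtree T hi⟩
  have hsingle : ∑ j ∈ Finset.univ \ T.subtree i, M.p i a j * f j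
      = M.p i a (T.parent i) * f (T.parent i) := by
    apply Finset.sum_eq_single_of_mem _ hmem
    intro j hj hne
    rw [Finset.mem_sdiff] at hj
    rcases (em (M.p i a j = 0)) with h0 | h0
    · rw [h0, zero_mul]
    · rcases hsf i hi a j h0 with h | h
      · exact absurd h hne
      · exact absurd h hj.2
  rw [hsplit, hsingle]; ring

/-- The subtree part of the path-sum telescoping identity. -/
lemma sum_subtree_pathSum (i : S) (a : A) (y : S → ℝ) :
    ∑ j ∈ T.subtree i, M.p i a j * pathSum T y j
      = M.ptail T i a i * pathSum T y i + ∑ k ∈ T.desc i, M.ptail T i a k * y k := by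
  classical
  have hterm : ∀ j ∈ T.subtree i, M.p i a j * pathSum T y j
      = M.p i a j * pathSum T y i
        + ∑ k ∈ T.desc i, (if j ∈ T.subtree k then M.p i a j * y k else 0) := by
    intro j hj
    obtain ⟨n, hn⟩ := (mem_subtree T).1 hj
    rw [pathSum_sub T y i n j hn, mul_add, Finset.sum_filter, Finset.mul_sum]
    congr 1
    apply Finset.sum_congr rfl
    intro k _
    by_cases h : j ∈ T.subtree k <;> simp [h]
  calc ∑ j ∈ T.subtree i, M.p i a j * pathSum T y j
      = ∑ j ∈ T.subtree i, (M.p i a j * pathSum T y i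
          + ∑ k ∈ T.desc i, (if j ∈ T.subtree k then M.p i a j * y k else 0)) :=
        Finset.sum_congr rfl hterm
    _ = (∑ j ∈ T.subtree i, M.p i a j) * pathSum T y i
          + ∑ j ∈ T.subtree i, ∑ k ∈ T.desc i,
              (if j ∈ T.subtree k then M.p i a j * y k else 0) := by
        rw [Finset.sum_add_distrib, Finset.sum_mul]
    _ = M.ptail T i a i * pathSum T y i + ∑ k ∈ T.desc i, M.ptail T i a k * y k := by
        congr 1
        rw [Finset.sum_comm]
        apply Finset.sum_congr rfl
        intro k hk
        have hsub : T.subtree k ⊆ T.subtree i := subtree_subset_of_mem_desc T hk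
        rw [MDP.ptail, Finset.sum_mul]
        rw [← Finset.sum_filter]
        have hfe : (T.subtree i).filter (fun j => j ∈ T.subtree k) = T.subtree k := by
          ext j
          simp only [Finset.mem_filter]
          exact ⟨fun h => h.2, fun h => ⟨hsub h, h⟩⟩
        rw [hfe]

lemma subtree_root_univ : T.subtree T.root = Finset.univ := by
  ext j; simp [mem_subtree_root T j]

/-- Tail probability at `i` itself equals `1 - p(i, parent i)` for non-root `i`. -/
lemma ptail_self (hsf : M.IsSkipFree T) {i : S} (hi : i ≠ T.root) (a : A) :
    M.ptail T i a i = 1 - M.p i a (T.parent i) := by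
  have h := sum_split T M hsf hi a (fun _ => 1)
  simp only [mul_one] at h
  rw [M.p_sum_one i a] at h
  rw [MDP.ptail]
  linarith [h]

/-- Telescoping identity at a non-root state. -/
lemma mulVec_pathSum (hsf : M.IsSkipFree T) {i : S} (hi : i ≠ T.root) (a : A) (y : S → ℝ) :
    ∑ j, M.p i a j * pathSum T y j
      = pathSum T y i - M.p i a (T.parent i) * y i
        + ∑ k ∈ T.desc i, M.ptail T i a k * y k := by
  rw [sum_split T M hsf hi a, sum_subtree_pathSum T M i a y, ptail_self T M hsf hi a]
  have hp : pathSum T y (T.parent i) = pathSum T y i - y i := by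
    rw [pathSum_parent T y hi]; ring
  rw [hp]; ring

/-- Telescoping identity at the root. -/
lemma mulVec_pathSum_root (a : A) (y : S → ℝ) :
    ∑ j, M.p T.root a j * pathSum T y j
      = ∑ k ∈ T.desc T.root, M.ptail T T.root a k * y k := by
  have h := sum_subtree_pathSum T M T.root a y
  rw [subtree_root_univ T, pathSum_root T y, mul_zero, zero_add] at h
  exact h



/-- Existence of a stationary distribution, positive at `z`, for an irreducible
row-stochastic matrix built from the MDP and a policy. -/
lemma exists_stationary [Nonempty S] (e : S → A) (hirr : MatIrreducible (M.Pmat e)) (z : S) :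
    ∃ π : S → ℝ, (∀ i, 0 ≤ π i) ∧ (∑ i, π i) = 1
      ∧ (∀ j, ∑ i, π i * M.p i (e i) j = π j) ∧ 0 < π z := by
  classical
  set P : Matrix S S ℝ := M.Pmat e with hP
  have hPnn : ∀ i j, 0 ≤ P i j := fun i j => M.p_nonneg i (e i) j
  have hProw : ∀ i, ∑ j, P i j = 1 := fun i => M.p_sum_one i (e i)
  -- `det (P - 1) = 0` since the all-ones vector is in the kernel
  have hdet : (P - 1).det = 0 := by
    rw [← Matrix.exists_mulVec_eq_zero_iff]
    refine ⟨(fun _ => 1), ?_, ?_⟩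
    · intro h
      have := congr_fun h (Classical.arbitrary S)
      simp at this
    · have h1 : P *ᵥ (fun _ => (1:ℝ)) = fun _ => (1:ℝ) := by
        funext i
        simp [Matrix.mulVec, dotProduct, hProw i]
      rw [Matrix.sub_mulVec, h1, Matrix.one_mulVec]
      simp
  -- a nonzero left eigenvector
  obtain ⟨w, hw0, hw⟩ := (Matrix.exists_vecMul_eq_zero_iff).2 hdet
  have hwP : ∀ j, ∑ i, w i * P i j = w j := by
    intro j
    have h0 := congr_fun hw j
    simp only [Matrix.vecMul, dotProduct, Matrix.sub_apply, Matrix.one_apply,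
      mul_sub, Finset.sum_sub_distrib, Pi.zero_apply, mul_ite, mul_one, mul_zero,
      Finset.sum_ite_eq', Finset.mem_univ, if_true] at h0
    linarith
  -- |w| is also a left eigenvector
  have habs_le : ∀ j, |w j| ≤ ∑ i, |w i| * P i j := by
    intro j
    calc |w j| = |∑ i, w i * P i j| := by rw [hwP j]
      _ ≤ ∑ i, |w i * P i j| := Finset.abs_sum_le_sum_abs _ _
      _ = ∑ i, |w i| * P i j := by
          apply Finset.sum_congr rfl
          intro i _
          rw [abs_mul, abs_of_nonneg (hPnn i j)]
  have htot : ∑ j, (∑ i, |w i| * P i j) = ∑ j, |w j| := by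
    rw [Finset.sum_comm]
    apply Finset.sum_congr rfl
    intro i _
    rw [← Finset.mul_sum, hProw i, mul_one]
  have habs : ∀ j, ∑ i, |w i| * P i j = |w j| := by
    have := (Finset.sum_eq_sum_iff_of_le (fun j (_ : j ∈ Finset.univ) => habs_le j)).1
      htot.symm
    intro j
    exact (this j (Finset.mem_univ j)).symm
  set W : ℝ := ∑ i, |w i| with hW
  have hWpos : 0 < W := by
    have h1 : ∃ i, w i ≠ 0 := by
      by_contra h
      push_neg at h
      exact hw0 (funext fun i => h i)
    obtain ⟨i0, hi0⟩ := h1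
    have : 0 < |w i0| := abs_pos.2 hi0
    have hle : |w i0| ≤ W := Finset.single_le_sum (fun i _ => abs_nonneg (w i))
      (Finset.mem_univ i0)
    linarith
  set π : S → ℝ := fun i => |w i| / W with hπ
  have hπnn : ∀ i, 0 ≤ π i := fun i => div_nonneg (abs_nonneg _) hWpos.le
  have hπsum : ∑ i, π i = 1 := by
    rw [hπ]
    rw [← Finset.sum_div]
    rw [div_eq_one_iff_eq hWpos.ne']
  have hπstat : ∀ j, ∑ i, π i * P i j = π j := by
    intro j
    rw [hπ]
    simp only [div_mul_eq_mul_div]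
    rw [← Finset.sum_div, habs j]
  -- positivity at z via irreducibility
  have hpow_nonneg : ∀ (n : ℕ) i j, 0 ≤ (P ^ n) i j := by
    intro n
    induction n with
    | zero => intro i j; by_cases h : i = j <;> simp [pow_zero, Matrix.one_apply, h]
    | succ m ih =>
        intro i j
        rw [pow_succ, Matrix.mul_apply]
        exact Finset.sum_nonneg fun k _ => mul_nonneg (ih i k) (hPnn k j)
  have hπpow : ∀ (n : ℕ) j, ∑ i, π i * (P ^ n) i j = π j := by
    intro n
    induction n with
    | zero => intro j; simp [pow_zero, Matrix.one_apply, mul_ite, Finset.sum_ite_eq']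
    | succ m ih =>
        intro j
        rw [show P ^ (m + 1) = P ^ m * P from pow_succ P m]
        calc ∑ i, π i * (P ^ m * P) i j
            = ∑ i, ∑ k, π i * ((P ^ m) i k * P k j) := by
              apply Finset.sum_congr rfl; intro i _
              rw [Matrix.mul_apply, Finset.mul_sum]
          _ = ∑ k, ∑ i, π i * ((P ^ m) i k * P k j) := Finset.sum_comm
          _ = ∑ k, (∑ i, π i * (P ^ m) i k) * P k j := by
              apply Finset.sum_congr rfl; intro k _
              rw [Finset.sum_mul]
              apply Finset.sum_congr rfl; intro i _
              ring
          _ = ∑ k, π k * P k j := by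
              apply Finset.sum_congr rfl; intro k _; rw [ih k]
          _ = π j := hπstat j
  have hπz : 0 < π z := by
    have h1 : ∃ j, 0 < π j := by
      by_contra h
      push_neg at h
      have : ∑ i, π i ≤ 0 := Finset.sum_nonpos fun i _ => h i
      rw [hπsum] at this
      linarith
    obtain ⟨j0, hj0⟩ := h1
    obtain ⟨n, hn0, hnpos⟩ := hirr j0 z
    have := hπpow n z
    have hge : π j0 * (P ^ n) j0 z ≤ ∑ i, π i * (P ^ n) i z :=
      Finset.single_le_sum (fun i _ => mul_nonneg (hπnn i) (hpow_nonneg n i z))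
        (Finset.mem_univ j0)
    rw [this] at hge
    exact lt_of_lt_of_le (mul_pos hj0 hnpos) hge
  exact ⟨π, hπnn, hπsum, hπstat, hπz⟩


section Cesaro

variable {P : Matrix S S ℝ}

lemma matpow_nonneg (hP : ∀ i j, 0 ≤ P i j) (n : ℕ) (i j : S) : 0 ≤ (P ^ n) i j := by
  induction n generalizing i j with
  | zero => by_cases h : i = j <;> simp [Matrix.one_apply, h]
  | succ m ih =>
      rw [pow_succ, Matrix.mul_apply]
      exact Finset.sum_nonneg fun k _ => mul_nonneg (ih i k) (hP k j)

lemma matpow_rowsum (hP : ∀ i, ∑ j, P i j = 1) (n : ℕ) (i : S) : ∑ j, (P ^ n) i j = 1 := by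
  induction n generalizing i with
  | zero => simp [Matrix.one_apply]
  | succ m ih =>
      simp only [pow_succ, Matrix.mul_apply]
      rw [Finset.sum_comm]
      calc ∑ k, ∑ j, (P ^ m) i k * P k j = ∑ k, (P ^ m) i k * ∑ j, P k j := by
            apply Finset.sum_congr rfl; intro k _; rw [Finset.mul_sum]
        _ = 1 := by
            simp only [hP, mul_one]
            exact ih i

lemma matpow_entry_le_one (hnn : ∀ i j, 0 ≤ P i j) (hrow : ∀ i, ∑ j, P i j = 1)
    (n : ℕ) (i j : S) : (P ^ n) i j ≤ 1 := by
  have h := matpow_rowsum hrow n i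
  have := Finset.single_le_sum (fun k (_ : k ∈ Finset.univ) => matpow_nonneg hnn n i k)
    (Finset.mem_univ j)
  linarith

lemma matpow_mulVec_le (hnn : ∀ i j, 0 ≤ P i j) {f h : S → ℝ} (hfh : ∀ j, f j ≤ h j)
    (n : ℕ) (i : S) : ((P ^ n) *ᵥ f) i ≤ ((P ^ n) *ᵥ h) i := by
  simp only [Matrix.mulVec, dotProduct]
  exact Finset.sum_le_sum fun j _ =>
    mul_le_mul_of_nonneg_left (hfh j) (matpow_nonneg hnn n i j)

lemma matpow_mulVec_abs_le (hnn : ∀ i j, 0 ≤ P i j) (hrow : ∀ i, ∑ j, P i j = 1)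
    (h : S → ℝ) (n : ℕ) (i : S) : |((P ^ n) *ᵥ h) i| ≤ ∑ j, |h j| := by
  simp only [Matrix.mulVec, dotProduct]
  calc |∑ j, (P ^ n) i j * h j| ≤ ∑ j, |(P ^ n) i j * h j| := Finset.abs_sum_le_sum_abs _ _
    _ ≤ ∑ j, |h j| := by
        apply Finset.sum_le_sum
        intro j _
        rw [abs_mul, abs_of_nonneg (matpow_nonneg hnn n i j)]
        calc (P ^ n) i j * |h j| ≤ 1 * |h j| :=
              mul_le_mul_of_nonneg_right (matpow_entry_le_one hnn hrow n i j) (abs_nonneg _)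
          _ = |h j| := one_mul _

/-- Summing the telescoping identity for an exact Poisson equation. -/
lemma cesaro_sum (hnn : ∀ i j, 0 ≤ P i j) (hrow : ∀ i, ∑ j, P i j = 1)
    (γ : ℝ) (h : S → ℝ) (m : ℕ) (i : S) :
    ∑ t ∈ Finset.range m, ((P ^ t) *ᵥ (fun j => γ + h j - (P *ᵥ h) j)) i
      = m * γ + h i - ((P ^ m) *ᵥ h) i := by
  have hterm : ∀ t : ℕ, ((P ^ t) *ᵥ (fun j => γ + h j - (P *ᵥ h) j)) i
      = γ + ((P ^ t) *ᵥ h) i - ((P ^ (t + 1)) *ᵥ h) i := by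
    intro t
    have hPh : (P ^ t) *ᵥ (P *ᵥ h) = (P ^ (t + 1)) *ᵥ h := by
      rw [Matrix.mulVec_mulVec, ← pow_succ]
    calc ((P ^ t) *ᵥ (fun j => γ + h j - (P *ᵥ h) j)) i
        = ∑ j, (P ^ t) i j * (γ + h j - (P *ᵥ h) j) := rfl
      _ = (∑ j, (P ^ t) i j) * γ + ∑ j, (P ^ t) i j * h j
            - ∑ j, (P ^ t) i j * (P *ᵥ h) j := by
          rw [Finset.sum_mul, ← Finset.sum_add_distrib, ← Finset.sum_sub_distrib]
          apply Finset.sum_congr rfl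
          intro j _
          ring
      _ = γ + ((P ^ t) *ᵥ h) i - ((P ^ t) *ᵥ (P *ᵥ h)) i := by
          rw [matpow_rowsum hrow t i, one_mul]
          rfl
      _ = γ + ((P ^ t) *ᵥ h) i - ((P ^ (t + 1)) *ᵥ h) i := by rw [hPh]
  calc ∑ t ∈ Finset.range m, ((P ^ t) *ᵥ (fun j => γ + h j - (P *ᵥ h) j)) i
      = ∑ t ∈ Finset.range m, (γ + (((P ^ t) *ᵥ h) i - ((P ^ (t + 1)) *ᵥ h) i)) := by
        apply Finset.sum_congr rfl
        intro t _
        rw [hterm t]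
        ring
    _ = m * γ + (((P ^ 0) *ᵥ h) i - ((P ^ m) *ᵥ h) i) := by
        rw [Finset.sum_add_distrib, Finset.sum_const, Finset.card_range, nsmul_eq_mul]
        congr 1
        exact Finset.sum_range_sub' (fun t => ((P ^ t) *ᵥ h) i) m
    _ = m * γ + h i - ((P ^ m) *ᵥ h) i := by
        rw [pow_zero, Matrix.one_mulVec]
        ring

lemma cesaro_tendsto (hnn : ∀ i j, 0 ≤ P i j) (hrow : ∀ i, ∑ j, P i j = 1)
    (γ : ℝ) (h : S → ℝ) (i : S) :
    Filter.Tendsto (fun m : ℕ => (m : ℝ)⁻¹ *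
        ∑ t ∈ Finset.range m, ((P ^ t) *ᵥ (fun j => γ + h j - (P *ᵥ h) j)) i)
      Filter.atTop (nhds γ) := by
  have hb : Filter.Tendsto
      (fun m : ℕ => γ + (m : ℝ)⁻¹ * (h i - ((P ^ m) *ᵥ h) i)) Filter.atTop (nhds γ) := by
    have h0 : Filter.Tendsto (fun m : ℕ => (m : ℝ)⁻¹ * (h i - ((P ^ m) *ᵥ h) i))
        Filter.atTop (nhds 0) := by
      apply squeeze_zero_norm (a := fun m : ℕ => (m : ℝ)⁻¹ * (|h i| + ∑ j, |h j|))
      · intro m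
        rw [Real.norm_eq_abs, abs_mul, abs_inv, Nat.abs_cast]
        apply mul_le_mul_of_nonneg_left _ (inv_nonneg.2 (Nat.cast_nonneg m))
        calc |h i - ((P ^ m) *ᵥ h) i| ≤ |h i| + |((P ^ m) *ᵥ h) i| := abs_sub _ _
          _ ≤ |h i| + ∑ j, |h j| := by
              linarith [matpow_mulVec_abs_le hnn hrow h m i]
      · simpa using tendsto_inv_atTop_nhds_zero_nat.mul_const (|h i| + ∑ j, |h j|)
    simpa using tendsto_const_nhds.add h0
  apply hb.congr'
  filter_upwards [Filter.eventually_ge_atTop 1] with m hm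
  rw [cesaro_sum hnn hrow γ h m i]
  have hm0 : (m : ℝ) ≠ 0 := Nat.cast_ne_zero.2 (by omega)
  field_simp
  ring

/-- Exact identification of the average cost from an exact Poisson equation. -/
lemma cesaro_limsup_eq (hnn : ∀ i j, 0 ≤ P i j) (hrow : ∀ i, ∑ j, P i j = 1)
    {γ : ℝ} {h c : S → ℝ} (hc : ∀ j, c j = γ + h j - (P *ᵥ h) j) (i : S) :
    Filter.limsup (fun m : ℕ => (m : ℝ)⁻¹ *
        ∑ t ∈ Finset.range m, ((P ^ t) *ᵥ c) i) Filter.atTop = γ := by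
  have hceq : c = fun j => γ + h j - (P *ᵥ h) j := funext hc
  rw [hceq]
  exact (cesaro_tendsto hnn hrow γ h i).limsup_eq

/-- Lower bound on the average cost from a Poisson inequality. -/
lemma cesaro_limsup_ge (hnn : ∀ i j, 0 ≤ P i j) (hrow : ∀ i, ∑ j, P i j = 1)
    {γ : ℝ} {h c : S → ℝ} (hc : ∀ j, γ + h j - (P *ᵥ h) j ≤ c j) (i : S) :
    γ ≤ Filter.limsup (fun m : ℕ => (m : ℝ)⁻¹ *
        ∑ t ∈ Finset.range m, ((P ^ t) *ᵥ c) i) Filter.atTop := by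
  set b : ℕ → ℝ := fun m => (m : ℝ)⁻¹ *
      ∑ t ∈ Finset.range m, ((P ^ t) *ᵥ (fun j => γ + h j - (P *ᵥ h) j)) i with hbdef
  set a : ℕ → ℝ := fun m => (m : ℝ)⁻¹ * ∑ t ∈ Finset.range m, ((P ^ t) *ᵥ c) i with hadef
  have hba : ∀ m, b m ≤ a m := by
    intro m
    apply mul_le_mul_of_nonneg_left _ (inv_nonneg.2 (Nat.cast_nonneg m))
    exact Finset.sum_le_sum fun t _ => matpow_mulVec_le hnn hc t i
  have hbt : Filter.Tendsto b Filter.atTop (nhds γ) := cesaro_tendsto hnn hrow γ h i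
  have h1 : Filter.limsup b Filter.atTop = γ := hbt.limsup_eq
  have habdd : Filter.IsBoundedUnder (· ≤ ·) Filter.atTop a := by
    apply Filter.isBoundedUnder_of
    refine ⟨∑ j, |c j|, fun m => ?_⟩
    rcases Nat.eq_zero_or_pos m with hm | hm
    · subst hm
      simp only [hadef]
      simp
      positivity
    · have h2 : ∑ t ∈ Finset.range m, ((P ^ t) *ᵥ c) i ≤ m * ∑ j, |c j| := by
        calc ∑ t ∈ Finset.range m, ((P ^ t) *ᵥ c) i ≤ ∑ t ∈ Finset.range m, ∑ j, |c j| := by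
              apply Finset.sum_le_sum
              intro t _
              have := matpow_mulVec_abs_le hnn hrow c t i
              exact le_trans (le_abs_self _) this
          _ = m * ∑ j, |c j| := by rw [Finset.sum_const, Finset.card_range, nsmul_eq_mul]
      have hm0 : (0:ℝ) < (m : ℝ) := Nat.cast_pos.2 hm
      calc a m ≤ (m : ℝ)⁻¹ * ((m : ℝ) * ∑ j, |c j|) :=
            mul_le_mul_of_nonneg_left h2 (inv_nonneg.2 hm0.le)
        _ = ∑ j, |c j| := by field_simp
  have hcob : Filter.IsCoboundedUnder (· ≤ ·) Filter.atTop b :=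
    hbt.isBoundedUnder_ge.isCoboundedUnder_le
  calc γ = Filter.limsup b Filter.atTop := h1.symm
    _ ≤ Filter.limsup a Filter.atTop :=
        Filter.limsup_le_limsup (Filter.Eventually.of_forall hba) hcob habdd
end Cesaro


/-- Induction over the tree: to prove a property at all non-root states, it suffices to
prove it assuming it holds at all (non-root) descendants. -/
lemma tree_induction (pred : S → Prop)
    (hstep : ∀ i, i ≠ T.root → (∀ k ∈ T.desc i, k ≠ T.root → pred k) → pred i) :
    ∀ i, i ≠ T.root → pred i := by
  have H : ∀ m : ℕ, ∀ i, (T.subtree i).card ≤ m → i ≠ T.root → pred i := by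
    intro m
    induction m with
    | zero =>
        intro i hc hi
        have hpos : 0 < (T.subtree i).card := Finset.card_pos.2 ⟨i, self_mem_subtree T i⟩
        omega
    | succ m ih =>
        intro i hc hi
        refine hstep i hi fun k hk hkr => ?_
        have := card_subtree_lt_of_mem_desc T hk
        exact ih k (by omega) hkr
  exact fun i hi => H (T.subtree i).card i le_rfl hi

lemma ciInf_le_apply {B : Type*} [Fintype B] [Nonempty B] (f : B → ℝ) (a : B) :
    ⨅ x, f x ≤ f a :=
  ciInf_le (Set.finite_range f).bddBelow a

/-- Swapping sums against a stationary vector. -/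
lemma stat_swap {π : S → ℝ} {q : S → S → ℝ} (hstat : ∀ j, ∑ i, π i * q i j = π j)
    (f : S → ℝ) : ∑ i, π i * ∑ j, q i j * f j = ∑ j, π j * f j := by
  calc ∑ i, π i * ∑ j, q i j * f j = ∑ i, ∑ j, π i * q i j * f j := by
        apply Finset.sum_congr rfl; intro i _
        rw [Finset.mul_sum]
        apply Finset.sum_congr rfl; intro j _; ring
    _ = ∑ j, ∑ i, π i * q i j * f j := Finset.sum_comm
    _ = ∑ j, π j * f j := by
        apply Finset.sum_congr rfl; intro j _
        rw [← Finset.sum_mul, hstat j]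

end SFAux

end

/-- Theorem 1(ii). The skip-free algorithm converges after a finite number of
iterations: there is an `n`, at most the number `|A|^|S|` of stationary deterministic
policies, with `g (n+1) = g n`, and then `d (n+1)` is average cost optimal. -/
theorem stmt11 {S A : Type*} [Fintype S] [DecidableEq S] [Fintype A] [Nonempty A]
    (T : SFTree S) (M : MDP S A)
    (hsf : M.IsSkipFree T) (hrec : IsRecurrentModel M)
    (h00 : ∀ a : A, M.p T.root a T.root < 1)
    (hpar : ∀ i, i ≠ T.root → ∀ a : A, 0 < M.p i a (T.parent i))
    (d : ℕ → S → A) (g : ℕ → ℝ) (y t : ℕ → S → ℝ) (u : ℕ → ℝ)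
    (hg0 : g 0 = M.avgCost (d 0) T.root)
    (hy : ∀ n, ∀ i, i ≠ T.root →
      y n i = ⨅ a : A, (M.c i a - g n + ∑ k ∈ T.desc i, M.ptail T i a k * y n k)
          / M.p i a (T.parent i))
    (hd : ∀ n, ∀ i, i ≠ T.root →
      (M.c i (d (n + 1) i) - g n + ∑ k ∈ T.desc i, M.ptail T i (d (n + 1) i) k * y n k)
          / M.p i (d (n + 1) i) (T.parent i) = y n i)
    (ht : ∀ n, ∀ i, i ≠ T.root →
      t n i = (1 + ∑ k ∈ T.desc i, M.ptail T i (d (n + 1) i) k * t n k)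
          / M.p i (d (n + 1) i) (T.parent i))
    (hu : ∀ n, u n = ⨅ a : A,
      (M.c T.root a - g n + ∑ k ∈ T.desc T.root, M.ptail T T.root a k * y n k)
        / (1 + ∑ k ∈ T.desc T.root, M.ptail T T.root a k * t n k))
    (hd0 : ∀ n,
      (M.c T.root (d (n + 1) T.root) - g n
          + ∑ k ∈ T.desc T.root, M.ptail T T.root (d (n + 1) T.root) k * y n k)
        / (1 + ∑ k ∈ T.desc T.root, M.ptail T T.root (d (n + 1) T.root) k * t n k) = u n)
    (hG : ∀ n, g (n + 1) = g n + u n) :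
    ∃ n : ℕ, n ≤ (Fintype.card A) ^ (Fintype.card S)
      ∧ g (n + 1) = g n
      ∧ ∀ d' : S → A, M.avgCost (d (n + 1)) T.root ≤ M.avgCost d' T.root := by
  classical
  haveI : Nonempty S := ⟨T.root⟩
  set R : S := T.root with hR
  -- positivity of the `t`-values
  have tpos : ∀ n : ℕ, ∀ i, i ≠ R → 0 < t n i := by
    intro n
    apply SFAux.tree_induction T
    intro i hi ih
    rw [ht n i hi]
    apply div_pos _ (hpar i hi _)
    have hsum : 0 ≤ ∑ k ∈ T.desc i, M.ptail T i (d (n + 1) i) k * t n k := by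
      apply Finset.sum_nonneg
      intro k hk
      have hkr : k ≠ R := by
        intro hkR; rw [hkR] at hk; exact SFAux.root_notMem_desc T i hk
      exact mul_nonneg (SFAux.ptail_nonneg T M i _ k) (ih k hk hkr).le
    linarith
  -- positivity of root denominators
  have Dpos : ∀ n : ℕ, ∀ a : A,
      0 < 1 + ∑ k ∈ T.desc R, M.ptail T R a k * t n k := by
    intro n a
    have hsum : 0 ≤ ∑ k ∈ T.desc R, M.ptail T R a k * t n k := by
      apply Finset.sum_nonneg
      intro k hk
      have hkr : k ≠ R := by
        intro hkR; rw [hkR] at hk; exact SFAux.root_notMem_desc T R hk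
      exact mul_nonneg (SFAux.ptail_nonneg T M R a k) (tpos n k hkr).le
    linarith
  -- Poisson equation at non-root states
  have poisson : ∀ n : ℕ, ∀ i, i ≠ R →
      M.c i (d (n + 1) i) - g n
        + (∑ j, M.p i (d (n + 1) i) j * SFAux.pathSum T (y n) j)
        - SFAux.pathSum T (y n) i = 0 := by
    intro n i hi
    have hp : 0 < M.p i (d (n + 1) i) (T.parent i) := hpar i hi _
    have hnum : M.c i (d (n + 1) i) - g n
        + ∑ k ∈ T.desc i, M.ptail T i (d (n + 1) i) k * y n k
        = y n i * M.p i (d (n + 1) i) (T.parent i) :=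
      (div_eq_iff hp.ne').1 (hd n i hi)
    have htel := SFAux.mulVec_pathSum T M hsf hi (d (n + 1) i) (y n)
    linarith
  -- Poisson equation at the root, with residual `u n * D n`
  have poisson_root : ∀ n : ℕ,
      M.c R (d (n + 1) R) - g n
        + (∑ j, M.p R (d (n + 1) R) j * SFAux.pathSum T (y n) j)
        - SFAux.pathSum T (y n) R
      = u n * (1 + ∑ k ∈ T.desc R, M.ptail T R (d (n + 1) R) k * t n k) := by
    intro n
    have hD := Dpos n (d (n + 1) R)
    have hnum : M.c R (d (n + 1) R) - g n
        + ∑ k ∈ T.desc R, M.ptail T R (d (n + 1) R) k * y n k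
        = u n * (1 + ∑ k ∈ T.desc R, M.ptail T R (d (n + 1) R) k * t n k) := by
      have h1 := hd0 n
      rw [div_eq_iff hD.ne'] at h1
      exact h1
    have htel := SFAux.mulVec_pathSum_root T M (d (n + 1) R) (y n)
    have h0 : SFAux.pathSum T (y n) R = 0 := SFAux.pathSum_root T (y n)
    rw [htel, h0]
    linarith
  -- analogous identities for the expected-time function τ
  have tau_eq : ∀ n : ℕ, ∀ i, i ≠ R →
      1 + (∑ j, M.p i (d (n + 1) i) j * SFAux.pathSum T (t n) j)
        - SFAux.pathSum T (t n) i = 0 := by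
    intro n i hi
    have hp : 0 < M.p i (d (n + 1) i) (T.parent i) := hpar i hi _
    have hnum : t n i * M.p i (d (n + 1) i) (T.parent i)
        = 1 + ∑ k ∈ T.desc i, M.ptail T i (d (n + 1) i) k * t n k := by
      rw [ht n i hi, div_mul_cancel₀ _ hp.ne']
    have htel := SFAux.mulVec_pathSum T M hsf hi (d (n + 1) i) (t n)
    linarith
  have tau_root : ∀ n : ℕ,
      1 + (∑ j, M.p R (d (n + 1) R) j * SFAux.pathSum T (t n) j)
        - SFAux.pathSum T (t n) R
      = 1 + ∑ k ∈ T.desc R, M.ptail T R (d (n + 1) R) k * t n k := by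
    intro n
    have htel := SFAux.mulVec_pathSum_root T M (d (n + 1) R) (t n)
    have h0 : SFAux.pathSum T (t n) R = 0 := SFAux.pathSum_root T (t n)
    rw [htel, h0]
    ring
  -- stationary distributions and exact average costs
  have hstat : ∀ e : S → A, ∃ π : S → ℝ, (∀ i, 0 ≤ π i) ∧ (∑ i, π i) = 1
      ∧ (∀ j, ∑ i, π i * M.p i (e i) j = π j) ∧ 0 < π R :=
    fun e => SFAux.exists_stationary M e (hrec e) R
  choose πf hπnn hπsum hπstat hπpos using hstat
  set gbar : (S → A) → ℝ := fun e => ∑ i, πf e i * M.c i (e i) with hgbar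
  -- the iterates are exact average costs
  have gnext_eq : ∀ n : ℕ, g (n + 1) = gbar (d (n + 1)) := by
    intro n
    set e : S → A := d (n + 1) with he
    set π : S → ℝ := πf e with hπ
    set h : S → ℝ := SFAux.pathSum T (y n) with hh
    set τ : S → ℝ := SFAux.pathSum T (t n) with hτ
    set D : ℝ := 1 + ∑ k ∈ T.desc R, M.ptail T R (e R) k * t n k with hD
    have hswap := SFAux.stat_swap (q := fun i j => M.p i (e i) j) (hπstat e)
    -- the Poisson residual function for costs
    have hsumE : ∑ i, π i * (M.c i (e i) - g n + (∑ j, M.p i (e i) j * h j) - h i)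
        = π R * (u n * D) := by
      rw [Finset.sum_eq_single R]
      · rw [poisson_root n]
      · intro i _ hiR
        rw [poisson n i hiR, mul_zero]
      · intro habs
        exact absurd (Finset.mem_univ R) habs
    have hsumE' : ∑ i, π i * (M.c i (e i) - g n + (∑ j, M.p i (e i) j * h j) - h i)
        = gbar e - g n := by
      have hexp : ∀ i, π i * (M.c i (e i) - g n + (∑ j, M.p i (e i) j * h j) - h i)
          = π i * M.c i (e i) - π i * g n
            + π i * (∑ j, M.p i (e i) j * h j) - π i * h i := by
        intro i; ring
      rw [Finset.sum_congr rfl (fun i _ => hexp i)]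
      rw [Finset.sum_sub_distrib, Finset.sum_add_distrib, Finset.sum_sub_distrib]
      rw [hswap h]
      rw [← Finset.sum_mul, hπsum e, one_mul]
      ring
    -- the Poisson residual function for times
    have hsumF : ∑ i, π i * (1 + (∑ j, M.p i (e i) j * τ j) - τ i) = π R * D := by
      rw [Finset.sum_eq_single R]
      · rw [tau_root n]
      · intro i _ hiR
        rw [tau_eq n i hiR, mul_zero]
      · intro habs
        exact absurd (Finset.mem_univ R) habs
    have hsumF' : ∑ i, π i * (1 + (∑ j, M.p i (e i) j * τ j) - τ i) = 1 := by
      have hexp : ∀ i, π i * (1 + (∑ j, M.p i (e i) j * τ j) - τ i)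
          = π i * 1 + π i * (∑ j, M.p i (e i) j * τ j) - π i * τ i := by
        intro i; ring
      rw [Finset.sum_congr rfl (fun i _ => hexp i)]
      rw [Finset.sum_sub_distrib, Finset.sum_add_distrib]
      rw [hswap τ]
      simp only [mul_one]
      rw [hπsum e]
      ring
    have hKac : π R * D = 1 := by rw [← hsumF, hsumF']
    have hmain : gbar e - g n = u n := by
      calc gbar e - g n = π R * (u n * D) := by rw [← hsumE', hsumE]
        _ = u n * (π R * D) := by ring
        _ = u n := by rw [hKac, mul_one]
    rw [hG n]
    linarith
  -- the improvement quantity is nonpositive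
  have u_nonpos : ∀ m : ℕ, u (m + 1) ≤ 0 := by
    intro m
    set e : S → A := d (m + 1) with he
    set yt : S → ℝ := fun i => y m i - u m * t m i with hyt
    -- the shifted values solve the policy equations at parameter `g (m+1)`
    have hyA : ∀ i, i ≠ R →
        M.c i (e i) - g (m + 1) + ∑ k ∈ T.desc i, M.ptail T i (e i) k * yt k
          = yt i * M.p i (e i) (T.parent i) := by
      intro i hi
      have hp : 0 < M.p i (e i) (T.parent i) := hpar i hi _
      have h1 : M.c i (e i) - g m + ∑ k ∈ T.desc i, M.ptail T i (e i) k * y m k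
          = y m i * M.p i (e i) (T.parent i) := (div_eq_iff hp.ne').1 (hd m i hi)
      have h2 : t m i * M.p i (e i) (T.parent i)
          = 1 + ∑ k ∈ T.desc i, M.ptail T i (e i) k * t m k := by
        rw [ht m i hi, div_mul_cancel₀ _ hp.ne']
      have h3 : ∑ k ∈ T.desc i, M.ptail T i (e i) k * yt k
          = (∑ k ∈ T.desc i, M.ptail T i (e i) k * y m k)
            - u m * ∑ k ∈ T.desc i, M.ptail T i (e i) k * t m k := by
        rw [Finset.mul_sum, ← Finset.sum_sub_distrib]
        apply Finset.sum_congr rfl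
        intro k _
        rw [hyt]
        ring
      rw [h3, hG m, hyt]
      simp only []
      linear_combination h1 + u m * h2
    have hyB : M.c R (e R) - g (m + 1) + ∑ k ∈ T.desc R, M.ptail T R (e R) k * yt k
        = 0 := by
      have hD := Dpos m (e R)
      have h1 : M.c R (e R) - g m + ∑ k ∈ T.desc R, M.ptail T R (e R) k * y m k
          = u m * (1 + ∑ k ∈ T.desc R, M.ptail T R (e R) k * t m k) :=
        (div_eq_iff hD.ne').1 (hd0 m)
      have h3 : ∑ k ∈ T.desc R, M.ptail T R (e R) k * yt k
          = (∑ k ∈ T.desc R, M.ptail T R (e R) k * y m k)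
            - u m * ∑ k ∈ T.desc R, M.ptail T R (e R) k * t m k := by
        rw [Finset.mul_sum, ← Finset.sum_sub_distrib]
        apply Finset.sum_congr rfl
        intro k _
        rw [hyt]
        ring
      rw [h3, hG m]
      linear_combination h1
    -- comparison of the minimized values with the shifted policy values
    have hcomp : ∀ i, i ≠ R → y (m + 1) i ≤ yt i := by
      apply SFAux.tree_induction T
      intro i hi ih
      have hp : 0 < M.p i (e i) (T.parent i) := hpar i hi _
      rw [hy (m + 1) i hi]
      refine le_trans (SFAux.ciInf_le_apply _ (e i)) ?_
      rw [div_le_iff₀ hp]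
      have hsum : ∑ k ∈ T.desc i, M.ptail T i (e i) k * y (m + 1) k
          ≤ ∑ k ∈ T.desc i, M.ptail T i (e i) k * yt k := by
        apply Finset.sum_le_sum
        intro k hk
        have hkr : k ≠ R := by
          intro hkR; rw [hkR] at hk; exact SFAux.root_notMem_desc T i hk
        exact mul_le_mul_of_nonneg_left (ih k hk hkr) (SFAux.ptail_nonneg T M i _ k)
      have := hyA i hi
      linarith
    -- conclude
    have hD' := Dpos (m + 1) (e R)
    have hnum : M.c R (e R) - g (m + 1) + ∑ k ∈ T.desc R, M.ptail T R (e R) k * y (m + 1) k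
        ≤ 0 := by
      have hsum : ∑ k ∈ T.desc R, M.ptail T R (e R) k * y (m + 1) k
          ≤ ∑ k ∈ T.desc R, M.ptail T R (e R) k * yt k := by
        apply Finset.sum_le_sum
        intro k hk
        have hkr : k ≠ R := by
          intro hkR; rw [hkR] at hk; exact SFAux.root_notMem_desc T R hk
        exact mul_le_mul_of_nonneg_left (hcomp k hkr) (SFAux.ptail_nonneg T M R _ k)
      linarith [hyB]
    rw [hu (m + 1)]
    refine le_trans (SFAux.ciInf_le_apply _ (e R)) ?_
    exact div_nonpos_of_nonpos_of_nonneg hnum hD'.le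
  -- termination
  set N : ℕ := (Fintype.card A) ^ (Fintype.card S) with hN
  have hterm : ∃ n : ℕ, 1 ≤ n ∧ n ≤ N ∧ u n = 0 := by
    by_contra hcon
    push_neg at hcon
    have hlt : ∀ k : ℕ, 1 ≤ k → k ≤ N → u k < 0 := by
      intro k h1 h2
      obtain ⟨m, rfl⟩ := Nat.exists_eq_add_of_le h1
      exact lt_of_le_of_ne (by rw [Nat.add_comm 1 m]; exact u_nonpos m) (hcon (1 + m) h1 h2)
    have hchain : ∀ b : ℕ, b ≤ N → ∀ a : ℕ, a < b → g (b + 1) < g (a + 1) := by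
      intro b
      induction b with
      | zero => intro _ a ha; omega
      | succ b ihb =>
          intro hbN a hab
          have hstep : g (b + 1 + 1) < g (b + 1) := by
            have := hlt (b + 1) (by omega) hbN
            rw [hG (b + 1)]
            linarith
          rcases Nat.lt_or_ge a b with h | h
          · exact lt_trans hstep (ihb (by omega) a h)
          · have : a = b := by omega
            rw [this]
            exact hstep
    have hmem : ∀ k : Fin (N + 1), g (k.val + 1) ∈ Finset.univ.image gbar := by
      intro k
      exact Finset.mem_image.2 ⟨d (k.val + 1), Finset.mem_univ _, (gnext_eq k.val).symm⟩
    have hinj : Set.InjOn (fun k : Fin (N + 1) => g (k.val + 1))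
        ↑(Finset.univ : Finset (Fin (N + 1))) := by
      intro j _ l _ hjl
      simp only at hjl
      by_contra hne
      have hne' : j.val ≠ l.val := fun h => hne (Fin.ext h)
      rcases Nat.lt_or_ge j.val l.val with h | h
      · have := hchain l.val (by omega) j.val h
        rw [hjl] at this
        exact lt_irrefl _ this
      · have h' : l.val < j.val := by omega
        have := hchain j.val (by omega) l.val h'
        rw [hjl] at this
        exact lt_irrefl _ this
    have hcard := Finset.card_le_card_of_injOn _ (fun k _ => hmem k) hinj
    rw [Finset.card_univ, Fintype.card_fin] at hcard
    have hcard2 : (Finset.univ.image gbar).card ≤ N := by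
      refine le_trans Finset.card_image_le ?_
      rw [Finset.card_univ, Fintype.card_fun]
    omega
  obtain ⟨n, hn1, hnN, hun⟩ := hterm
  refine ⟨n, hnN, by rw [hG n, hun, add_zero], ?_⟩
  -- optimality
  have avg_eq : M.avgCost (d (n + 1)) R = g n := by
    set e : S → A := d (n + 1) with he
    set h : S → ℝ := SFAux.pathSum T (y n) with hh
    have hnn : ∀ i j, 0 ≤ M.Pmat e i j := by
      intro i j
      show (0:ℝ) ≤ M.p i (e i) j
      exact M.p_nonneg i (e i) j
    have hrow : ∀ i, ∑ j, M.Pmat e i j = 1 := by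
      intro i
      show ∑ j, M.p i (e i) j = 1
      exact M.p_sum_one i (e i)
    have hmv : ∀ j, (M.Pmat e *ᵥ h) j = ∑ j', M.p j (e j) j' * h j' := by
      intro j
      rfl
    have hc : ∀ j, M.cvec e j = g n + h j - (M.Pmat e *ᵥ h) j := by
      intro j
      rw [hmv j]
      show M.c j (e j) = _
      rw [hh]
      by_cases hjR : j = R
      · subst hjR
        have hpr := poisson_root n
        rw [hun, zero_mul, ← he] at hpr
        linarith
      · have hps := poisson n j hjR
        rw [← he] at hps
        linarith
    rw [MDP.avgCost]
    exact SFAux.cesaro_limsup_eq hnn hrow hc R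
  have lower : ∀ d' : S → A, g n ≤ M.avgCost d' R := by
    intro d'
    set h : S → ℝ := SFAux.pathSum T (y n) with hh
    have hnn : ∀ i j, 0 ≤ M.Pmat d' i j := by
      intro i j
      show (0:ℝ) ≤ M.p i (d' i) j
      exact M.p_nonneg i (d' i) j
    have hrow : ∀ i, ∑ j, M.Pmat d' i j = 1 := by
      intro i
      show ∑ j, M.p i (d' i) j = 1
      exact M.p_sum_one i (d' i)
    have hmv : ∀ j, (M.Pmat d' *ᵥ h) j = ∑ j', M.p j (d' j) j' * h j' := by
      intro j
      rfl
    have hc : ∀ j, g n + h j - (M.Pmat d' *ᵥ h) j ≤ M.cvec d' j := by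
      intro j
      rw [hmv j]
      show _ ≤ M.c j (d' j)
      by_cases hjR : j = R
      · subst hjR
        -- root Bellman inequality from `u n = 0`
        have hinf := hu n
        have hle : u n ≤ (M.c R (d' R) - g n + ∑ k ∈ T.desc R, M.ptail T R (d' R) k * y n k)
            / (1 + ∑ k ∈ T.desc R, M.ptail T R (d' R) k * t n k) := by
          rw [hinf]
          exact SFAux.ciInf_le_apply _ (d' R)
        rw [hun] at hle
        have hD := Dpos n (d' R)
        have hnum : 0 ≤ M.c R (d' R) - g n
            + ∑ k ∈ T.desc R, M.ptail T R (d' R) k * y n k := by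
          have h1 := mul_nonneg hle hD.le
          rw [div_mul_cancel₀ _ hD.ne'] at h1
          exact h1
        have htel := SFAux.mulVec_pathSum_root T M (d' R) (y n)
        rw [← hR] at htel
        have h0 : SFAux.pathSum T (y n) R = 0 := SFAux.pathSum_root T (y n)
        rw [hh, htel, h0]
        linarith
      · have hp : 0 < M.p j (d' j) (T.parent j) := hpar j hjR _
        have hle : y n j ≤ (M.c j (d' j) - g n + ∑ k ∈ T.desc j, M.ptail T j (d' j) k * y n k)
            / M.p j (d' j) (T.parent j) := by
          rw [hy n j hjR]
          exact SFAux.ciInf_le_apply _ (d' j)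
        rw [le_div_iff₀ hp] at hle
        have htel := SFAux.mulVec_pathSum T M hsf hjR (d' j) (y n)
        rw [hh]
        linarith
    rw [MDP.avgCost]
    exact SFAux.cesaro_limsup_ge hnn hrow hc R
  intro d'
  rw [avg_eq]
  exact lower d'
end

section
/- Let P be a row-stochastic matrix on the finite state space {0, 1, …, M} that is skip-free in the negative direction, i.e. P(i,j) = 0 whenever j < i − 1. Then every closed communicating class of P is a set of consecutive integers: if E is a closed communicating class and i, j ∈ E with i ≤ k ≤ j, then k ∈ E. -/
open Finset

lemma stmt12_pow_nonneg {M : ℕ} (P : Matrix (Fin (M + 1)) (Fin (M + 1)) ℝ)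
    (hP : ∀ i j, 0 ≤ P i j) : ∀ n i j, 0 ≤ (P ^ n) i j := by
  intro n
  induction n with
  | zero =>
    intro i j
    simp [Matrix.one_apply]
    split <;> norm_num
  | succ n ih =>
    intro i j
    rw [pow_succ, Matrix.mul_apply]
    exact Finset.sum_nonneg fun c _ => mul_nonneg (ih i c) (hP c j)

lemma stmt12_step {M : ℕ} (P : Matrix (Fin (M + 1)) (Fin (M + 1)) ℝ)
    (hP : ∀ i j, 0 ≤ P i j) {a c k : Fin (M + 1)} {m : ℕ}
    (h1 : 0 < P a c) (h2 : 0 < (P ^ m) c k) : 0 < (P ^ (m + 1)) a k := by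
  rw [pow_succ', Matrix.mul_apply]
  apply Finset.sum_pos'
  · intro x _
    exact mul_nonneg (hP a x) (stmt12_pow_nonneg P hP m x k)
  · exact ⟨c, Finset.mem_univ c, mul_pos h1 h2⟩

lemma stmt12_key {M : ℕ} (P : Matrix (Fin (M + 1)) (Fin (M + 1)) ℝ)
    (hP : ∀ i j, 0 ≤ P i j)
    (hsf : ∀ i j : Fin (M + 1), (j : ℕ) + 1 < (i : ℕ) → P i j = 0) :
    ∀ n (a b k : Fin (M + 1)), b ≤ k → k ≤ a → 0 < (P ^ n) a b →
      (∃ m : ℕ, 0 < (P ^ m) a k) ∧ (∃ m : ℕ, 0 < (P ^ m) k b) := by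
  intro n
  induction n with
  | zero =>
    intro a b k hbk hka hpos
    simp only [pow_zero, Matrix.one_apply] at hpos
    split at hpos
    · subst ‹a = b›
      have : k = a := le_antisymm hka hbk
      subst this
      exact ⟨⟨0, by simp [Matrix.one_apply]⟩, ⟨0, by simp [Matrix.one_apply]⟩⟩
    · norm_num at hpos
  | succ n ih =>
    intro a b k hbk hka hpos
    rw [pow_succ', Matrix.mul_apply] at hpos
    -- extract a positive term
    obtain ⟨c, hc⟩ : ∃ c, 0 < P a c * (P ^ n) c b := by
      by_contra h
      push_neg at h
      have := Finset.sum_nonpos (fun c (_ : c ∈ Finset.univ) => h c)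
      linarith
    have hPac : 0 < P a c := by
      rcases lt_or_ge 0 (P a c) with h | h
      · exact h
      · exfalso
        have : P a c = 0 := le_antisymm h (hP a c)
        rw [this, zero_mul] at hc
        exact lt_irrefl 0 hc
    have hcb : 0 < (P ^ n) c b := by
      by_contra h
      push_neg at h
      have : P a c * (P ^ n) c b ≤ 0 :=
        mul_nonpos_of_nonneg_of_nonpos (hP a c) h
      linarith
    -- skip-free : c ≥ a - 1, i.e. a ≤ c + 1
    have hac : (a : ℕ) ≤ (c : ℕ) + 1 := by
      by_contra h
      push_neg at h
      have := hsf a c h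
      rw [this] at hPac
      exact lt_irrefl 0 hPac
    rcases le_or_gt k c with hkc | hck
    · -- k ≤ c : use IH on path c → b
      obtain ⟨⟨m1, hm1⟩, hm2⟩ := ih c b k hbk hkc hcb
      exact ⟨⟨m1 + 1, stmt12_step P hP hPac hm1⟩, hm2⟩
    · -- c < k ≤ a ≤ c + 1 forces k = a
      have hka' : (k : ℕ) = (a : ℕ) := by omega
      have : k = a := Fin.ext hka'
      subst this
      refine ⟨⟨0, by simp [Matrix.one_apply]⟩, ⟨n + 1, ?_⟩⟩
      rw [pow_succ', Matrix.mul_apply]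
      apply Finset.sum_pos'
      · intro x _
        exact mul_nonneg (hP k x) (stmt12_pow_nonneg P hP n x b)
      · exact ⟨c, Finset.mem_univ c, mul_pos hPac hcb⟩

/-- for a row-stochastic matrix on `{0,…,M}` that is skip-free in the
negative direction (`P i j = 0` whenever `j < i - 1`), every closed communicating class is
a set of consecutive integers. -/
theorem stmt12 {M : ℕ} (P : Matrix (Fin (M + 1)) (Fin (M + 1)) ℝ)
    (hP : ∀ i j, 0 ≤ P i j) (hrow : ∀ i, ∑ j, P i j = 1)
    (hsf : ∀ i j : Fin (M + 1), (j : ℕ) + 1 < (i : ℕ) → P i j = 0)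
    (E : Set (Fin (M + 1)))
    (hcomm : ∀ i ∈ E, ∀ j ∈ E, ∃ n : ℕ, 0 < (P ^ n) i j)
    (hclosed : ∀ i ∈ E, ∀ j, 0 < P i j → j ∈ E)
    (hclass : ∀ i ∈ E, ∀ j, (∃ n : ℕ, 0 < (P ^ n) i j) → (∃ n : ℕ, 0 < (P ^ n) j i) → j ∈ E) :
    ∀ i ∈ E, ∀ j ∈ E, ∀ k : Fin (M + 1), i ≤ k → k ≤ j → k ∈ E := by
  intro i hi j hj k hik hkj
  -- j reaches i
  obtain ⟨n, hn⟩ := hcomm j hj i hi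
  -- split the path at k
  obtain ⟨⟨m1, hm1⟩, ⟨m2, hm2⟩⟩ := stmt12_key P hP hsf n j i k hik hkj hn
  -- i reaches j
  obtain ⟨n', hn'⟩ := hcomm i hi j hj
  -- k reaches j : k → i → j
  have hkj' : ∃ m : ℕ, 0 < (P ^ m) k j := by
    refine ⟨m2 + n', ?_⟩
    rw [pow_add, Matrix.mul_apply]
    apply Finset.sum_pos'
    · intro x _
      exact mul_nonneg (stmt12_pow_nonneg P hP m2 k x) (stmt12_pow_nonneg P hP n' x j)
    · exact ⟨i, Finset.mem_univ i, mul_pos hm2 hn'⟩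
  exact hclass j hj k ⟨m1, hm1⟩ hkj'
end
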